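/- arXiv:hep-th/9806244 — 8 statements merged into one kernel-verified Lean document; each statement's English description precedes it below -/
import Mathlib

section
/- Let k ∈ ℝ⁴ be a null future-pointing vector (k·k = 0 and k₀ > 0) and let v ∈ ℂ⁴ satisfy k₀v₀ − k₁v₁ − k₂v₂ − k₃v₃ = 0. Then |v₁|² + |v₂|² + |v₃|² = |v₀|² holds if and only if there exists λ ∈ ℂ such that v_μ = λ·k_μ for all μ = 0,1,2,3. -/
noncomputable section

/-- Minkowski bilinear form on `ℝ⁴`. -/
def mink (x y : Fin 4 → ℝ) : ℝ := x 0 * y 0 - x 1 * y 1 - x 2 * y 2 - x 3 * y 3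

/-- For a null future-pointing `k ∈ ℝ⁴` and a transversal `v ∈ ℂ⁴` (`k^μ v_μ = 0`),
equality `|v₁|² + |v₂|² + |v₃|² = |v₀|²` holds iff `v` is proportional to `k`. -/
theorem null_transversal_equality_iff_proportional
    (k : Fin 4 → ℝ) (hnull : mink k k = 0) (hfut : 0 < k 0)
    (v : Fin 4 → ℂ)
    (htrans : (k 0 : ℂ) * v 0 - (k 1 : ℂ) * v 1 - (k 2 : ℂ) * v 2 - (k 3 : ℂ) * v 3 = 0) :
    (‖v 1‖ ^ 2 + ‖v 2‖ ^ 2 + ‖v 3‖ ^ 2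
        = ‖v 0‖ ^ 2) ↔
      ∃ lam : ℂ, ∀ μ : Fin 4, v μ = lam * (k μ : ℂ) := by
  have hk : k 0 ^ 2 = k 1 ^ 2 + k 2 ^ 2 + k 3 ^ 2 := by
    unfold mink at hnull; nlinarith [hnull]
  have htr : (k 0 : ℂ) * v 0 = (k 1 : ℂ) * v 1 + (k 2 : ℂ) * v 2 + (k 3 : ℂ) * v 3 := by
    linear_combination htrans
  constructor
  · intro h
    by_cases hy : v 1 = 0 ∧ v 2 = 0 ∧ v 3 = 0
    · obtain ⟨h1, h2, h3⟩ := hy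
      have hv0 : v 0 = 0 := by
        rw [h1, h2, h3] at h
        simp only [norm_zero] at h
        have : ‖v 0‖ = 0 := by nlinarith [norm_nonneg (v 0)]
        simpa using this
      exact ⟨0, by intro μ; fin_cases μ <;> simp [hv0, h1, h2, h3]⟩
    · set x : EuclideanSpace ℂ (Fin 3) := WithLp.toLp 2 ![(k 1 : ℂ), (k 2 : ℂ), (k 3 : ℂ)] with hxdef
      set y : EuclideanSpace ℂ (Fin 3) := WithLp.toLp 2 ![v 1, v 2, v 3] with hydef
      have hy0 : y ≠ 0 := by
        intro h0
        apply hy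
        refine ⟨?_, ?_, ?_⟩ <;>
        · have := fun i => congrArg (fun z : EuclideanSpace ℂ (Fin 3) => z i) h0
          first
          | simpa [hydef] using this 0
          | simpa [hydef] using this 1
          | simpa [hydef] using this 2
      have hx0 : x ≠ 0 := by
        intro h0
        have h1 : k 1 = 0 := by have := congrArg (fun z : EuclideanSpace ℂ (Fin 3) => z 0) h0; simpa [hxdef] using this
        have h2 : k 2 = 0 := by have := congrArg (fun z : EuclideanSpace ℂ (Fin 3) => z 1) h0; simpa [hxdef] using this
        have h3 : k 3 = 0 := by have := congrArg (fun z : EuclideanSpace ℂ (Fin 3) => z 2) h0; simpa [hxdef] using this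
        nlinarith
      have hinner : (inner ℂ x y : ℂ) = (k 0 : ℂ) * v 0 := by
        rw [htr]
        simp [hxdef, hydef, PiLp.inner_apply, Fin.sum_univ_three, RCLike.inner_apply,
          Complex.conj_ofReal, mul_comm]
      have hnx : ‖x‖ = k 0 := by
        rw [EuclideanSpace.norm_eq]
        simp only [hxdef, PiLp.toLp_apply]
        rw [show ∑ i, ‖(![(k 1 : ℂ), (k 2 : ℂ), (k 3 : ℂ)] : Fin 3 → ℂ) i‖ ^ 2
            = k 1 ^ 2 + k 2 ^ 2 + k 3 ^ 2 by
          simp [Fin.sum_univ_three, Complex.norm_real, sq_abs]]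
        rw [← hk, Real.sqrt_sq hfut.le]
      have hny : ‖y‖ = ‖v 0‖ := by
        rw [EuclideanSpace.norm_eq]
        rw [show ∑ i, ‖y i‖ ^ 2 = ‖v 0‖ ^ 2 by
          simp [hydef, Fin.sum_univ_three]; linarith [h]]
        exact Real.sqrt_sq (norm_nonneg _)
      have heq : ‖(inner ℂ x y : ℂ)‖ = ‖x‖ * ‖y‖ := by
        rw [hinner, hnx, hny]
        simp [Complex.norm_real, abs_of_pos hfut]
      obtain ⟨r, -, hr⟩ := (norm_inner_eq_norm_iff hx0 hy0).mp heq
      have h1 : v 1 = r * (k 1 : ℂ) := by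
        have := congrArg (fun z : EuclideanSpace ℂ (Fin 3) => z 0) hr; simpa [hydef, hxdef] using this
      have h2 : v 2 = r * (k 2 : ℂ) := by
        have := congrArg (fun z : EuclideanSpace ℂ (Fin 3) => z 1) hr; simpa [hydef, hxdef] using this
      have h3 : v 3 = r * (k 3 : ℂ) := by
        have := congrArg (fun z : EuclideanSpace ℂ (Fin 3) => z 2) hr; simpa [hydef, hxdef] using this
      have h0 : v 0 = r * (k 0 : ℂ) := by
        have hk0 : (k 0 : ℂ) ≠ 0 := by exact_mod_cast hfut.ne'
        have hkc : (k 0 : ℂ) ^ 2 = (k 1 : ℂ) ^ 2 + (k 2 : ℂ) ^ 2 + (k 3 : ℂ) ^ 2 := by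
          exact_mod_cast congrArg (Complex.ofReal) hk
        have hmul : (k 0 : ℂ) * v 0 = (k 0 : ℂ) * (r * (k 0 : ℂ)) := by
          rw [h1, h2, h3] at htr
          linear_combination htr - r * hkc
        exact mul_left_cancel₀ hk0 hmul
      exact ⟨r, by intro μ; fin_cases μ <;> assumption⟩
  · rintro ⟨lam, hlam⟩
    have hcast : ∀ μ : Fin 4, ‖v μ‖ ^ 2 = ‖lam‖ ^ 2 * (k μ) ^ 2 := by
      intro μ
      rw [hlam μ, norm_mul, mul_pow, Complex.norm_real, Real.norm_eq_abs, sq_abs]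
    rw [hcast 0, hcast 1, hcast 2, hcast 3]
    nlinarith [hk]
end
end

section
/- (Lemma 2.1 of the paper, one-particle positivity.) For every φ in the subspace H' of L²(ℝ³, μ₀; ℂ⁴), the Krein form is nonnegative: (φ,φ) = ∫ (∑_{i=1}^{3} |φ_i(p)|² − |φ₀(p)|²) dμ₀(p) ≥ 0. -/
open MeasureTheory

noncomputable section

/-- `ω_m(p) = √(‖p‖² + m²)` (Euclidean norm on `ℝ³`). -/
def omegaM (m : ℝ) (p : Fin 3 → ℝ) : ℝ := Real.sqrt ((∑ i, p i ^ 2) + m ^ 2)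

/-- The Lorentz invariant measure `μ_m` on `ℝ³`: Lebesgue measure with density `1/(2ω_m)`. -/
def muM (m : ℝ) : Measure (Fin 3 → ℝ) :=
  volume.withDensity fun p => ENNReal.ofReal (1 / (2 * omegaM m p))

/-- Lemma 2.1 of the paper: for `φ` in the subspace `H'` of `L²(ℝ³, μ₀; ℂ⁴)`
(transversality `‖p‖ φ₀(p) = ∑ᵢ pᵢ φᵢ(p)` a.e.), the Krein form is nonnegative:
`∫ (∑_{i=1}^3 |φᵢ(p)|² − |φ₀(p)|²) dμ₀(p) ≥ 0`. -/
theorem krein_form_nonneg_on_H'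
    (φ : (Fin 3 → ℝ) → Fin 4 → ℂ)
    (hL2 : ∀ μidx : Fin 4, MemLp (fun p => φ p μidx) 2 (muM 0))
    (hH' : ∀ᵐ p ∂(muM 0),
      (omegaM 0 p : ℂ) * φ p 0 = ∑ i : Fin 3, (p i : ℂ) * φ p i.succ) :
    0 ≤ ∫ p, ((∑ i : Fin 3, ‖φ p i.succ‖ ^ 2)
        - ‖φ p 0‖ ^ 2) ∂(muM 0) := by
  have hne : ∀ᵐ p ∂(muM 0), (∑ i, p i ^ 2) ≠ 0 := by
    have h0 : ∀ᵐ p : Fin 3 → ℝ ∂volume, (∑ i, p i ^ 2) ≠ 0 := by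
      have hvol : volume {p : Fin 3 → ℝ | (∑ i, p i ^ 2) = 0} = 0 := by
        refine measure_mono_null (fun p hp => ?_) (measure_singleton (0 : Fin 3 → ℝ))
        simp only [Set.mem_setOf_eq] at hp
        have := (Finset.sum_eq_zero_iff_of_nonneg
          (fun i _ => sq_nonneg (p i))).1 hp
        refine Set.mem_singleton_iff.2 (funext fun i => ?_)
        have := this i (Finset.mem_univ i)
        exact pow_eq_zero_iff (n := 2) (by norm_num) |>.1 this
      rw [ae_iff]
      simpa using hvol
    exact (withDensity_absolutelyContinuous volume _).ae_le h0
  apply integral_nonneg_of_ae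
  filter_upwards [hH', hne] with p heq hS
  have hSpos : 0 < ∑ i, p i ^ 2 :=
    lt_of_le_of_ne (Finset.sum_nonneg fun i _ => sq_nonneg _) (Ne.symm hS)
  have homega : omegaM 0 p = Real.sqrt (∑ i, p i ^ 2) := by simp [omegaM]
  have hωpos : 0 < omegaM 0 p := by rw [homega]; exact Real.sqrt_pos.2 hSpos
  have hω2 : omegaM 0 p ^ 2 = ∑ i, p i ^ 2 := by
    rw [homega, Real.sq_sqrt hSpos.le]
  set a := ‖φ p 0‖ with ha
  set T := ∑ i : Fin 3, ‖φ p i.succ‖ ^ 2 with hT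
  have h1 : omegaM 0 p * a = ‖∑ i : Fin 3, (p i : ℂ) * φ p i.succ‖ := by
    rw [← heq, norm_mul, Complex.norm_real, Real.norm_of_nonneg hωpos.le]
  have h2 : ‖∑ i : Fin 3, (p i : ℂ) * φ p i.succ‖
      ≤ ∑ i : Fin 3, |p i| * ‖φ p i.succ‖ := by
    refine (norm_sum_le _ _).trans_eq ?_
    refine Finset.sum_congr rfl fun i _ => ?_
    rw [norm_mul, Complex.norm_real, Real.norm_eq_abs]
  have h3 : (∑ i : Fin 3, |p i| * ‖φ p i.succ‖) ^ 2
      ≤ (∑ i : Fin 3, |p i| ^ 2) * T := by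
    simpa using Finset.sum_mul_sq_le_sq_mul_sq Finset.univ
      (fun i => |p i|) (fun i => ‖φ p i.succ‖)
  have habs : (∑ i : Fin 3, |p i| ^ 2) = ∑ i, p i ^ 2 := by
    simp [sq_abs]
  have hkey : (omegaM 0 p * a) ^ 2 ≤ (∑ i, p i ^ 2) * T := by
    rw [h1]
    calc ‖∑ i : Fin 3, (p i : ℂ) * φ p i.succ‖ ^ 2
        ≤ (∑ i : Fin 3, |p i| * ‖φ p i.succ‖) ^ 2 := by
          apply pow_le_pow_left₀ (norm_nonneg _) h2
      _ ≤ (∑ i, p i ^ 2) * T := by rw [← habs]; exact h3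
  have : (∑ i, p i ^ 2) * a ^ 2 ≤ (∑ i, p i ^ 2) * T := by
    calc (∑ i, p i ^ 2) * a ^ 2 = (omegaM 0 p * a) ^ 2 := by
          rw [mul_pow, hω2]
      _ ≤ _ := hkey
  have ha2T : a ^ 2 ≤ T := le_of_mul_le_mul_left this hSpos
  simp only [Pi.zero_apply]
  linarith
end
end

section
/- (Lemma 2.2 of the paper, characterization of null vectors.) Let φ ∈ H' ⊆ L²(ℝ³, μ₀; ℂ⁴). Then (φ,φ) = 0 if and only if there exists a measurable function λ : ℝ³ → ℂ such that for μ₀-a.e. p ∈ ℝ³ one has φ_μ(p) = λ(p)·(τ₀(p))_μ for all μ = 0,1,2,3 (where τ₀(p) = (‖p‖, p) is viewed in ℂ⁴). -/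
open MeasureTheory

noncomputable section

/-- `τ_m(p) = (ω_m(p), p) ∈ ℝ⁴`, a point on the mass-`m` hyperboloid. -/
def tauM (m : ℝ) (p : Fin 3 → ℝ) : Fin 4 → ℝ := ![omegaM m p, p 0, p 1, p 2]

lemma key (ω p0 p1 p2 u v x0 y0 x1 y1 x2 y2 : ℝ)
    (hS : p0^2+p1^2+p2^2 = ω^2)
    (hre : ω*u = p0*x0+p1*x1+p2*x2) (him : ω*v = p0*y0+p1*y1+p2*y2) :
    ω^2*((x0^2+y0^2+x1^2+y1^2+x2^2+y2^2) - (u^2+v^2))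
     = (ω*x0-u*p0)^2+(ω*y0-v*p0)^2+(ω*x1-u*p1)^2+(ω*y1-v*p1)^2+(ω*x2-u*p2)^2+(ω*y2-v*p2)^2 := by
  linear_combination (-(u^2+v^2))*hS - 2*ω*u*hre - 2*ω*v*him

lemma omega_sq (p : Fin 3 → ℝ) : p 0 ^2 + p 1 ^2 + p 2 ^2 = omegaM 0 p ^ 2 := by
  rw [omegaM, Real.sq_sqrt]
  · simp [Fin.sum_univ_three]
  · positivity

lemma omega_nonneg (p : Fin 3 → ℝ) : 0 ≤ omegaM 0 p := Real.sqrt_nonneg _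

lemma keyC (p : Fin 3 → ℝ) (φ : Fin 4 → ℂ) (hω : omegaM 0 p ≠ 0)
    (hH : (omegaM 0 p : ℂ) * φ 0 = ∑ i : Fin 3, (p i : ℂ) * φ i.succ) :
    ‖φ 0‖^2 ≤ ∑ i : Fin 3, ‖φ i.succ‖^2 ∧
    ((∑ i : Fin 3, ‖φ i.succ‖^2) - ‖φ 0‖^2 = 0 →
      ∀ i : Fin 3, φ i.succ = φ 0 / (omegaM 0 p : ℂ) * (p i : ℂ)) := by
  set ω := omegaM 0 p with hωdef
  have hω0 : 0 < ω := lt_of_le_of_ne (omega_nonneg p) (Ne.symm hω)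
  have hS := omega_sq p
  rw [Fin.sum_univ_three] at hH
  simp only [show (0:Fin 3).succ = 1 from rfl, show (1:Fin 3).succ = 2 from rfl,
    show (2:Fin 3).succ = 3 from rfl] at hH
  have hre : ω * (φ 0).re = p 0 * (φ 1).re + p 1 * (φ 2).re + p 2 * (φ 3).re := by
    have := congrArg Complex.re hH
    simpa using this
  have him : ω * (φ 0).im = p 0 * (φ 1).im + p 1 * (φ 2).im + p 2 * (φ 3).im := by
    have := congrArg Complex.im hH
    simpa using this
  have E := key ω (p 0) (p 1) (p 2) (φ 0).re (φ 0).im (φ 1).re (φ 1).im (φ 2).re (φ 2).im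
      (φ 3).re (φ 3).im hS hre him
  have habs : ∀ z : ℂ, ‖z‖ ^ 2 = z.re^2 + z.im^2 := by
    intro z; rw [Complex.sq_norm, Complex.normSq_apply]; ring
  constructor
  · rw [Fin.sum_univ_three]
    simp only [show (0:Fin 3).succ = 1 from rfl, show (1:Fin 3).succ = 2 from rfl,
      show (2:Fin 3).succ = 3 from rfl, habs]
    have h2 : 0 ≤ ω^2*(((φ 1).re^2+(φ 1).im^2+(φ 2).re^2+(φ 2).im^2+(φ 3).re^2+(φ 3).im^2) - ((φ 0).re^2+(φ 0).im^2)) := by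
      rw [E]; positivity
    nlinarith [h2, sq_nonneg ω, hω0, mul_pos hω0 hω0]
  · intro heq i
    rw [Fin.sum_univ_three] at heq
    simp only [show (0:Fin 3).succ = 1 from rfl, show (1:Fin 3).succ = 2 from rfl,
      show (2:Fin 3).succ = 3 from rfl, habs] at heq
    have hsum0 : (ω*(φ 1).re-(φ 0).re*p 0)^2+(ω*(φ 1).im-(φ 0).im*p 0)^2
        +(ω*(φ 2).re-(φ 0).re*p 1)^2+(ω*(φ 2).im-(φ 0).im*p 1)^2
        +(ω*(φ 3).re-(φ 0).re*p 2)^2+(ω*(φ 3).im-(φ 0).im*p 2)^2 = 0 := by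
      linear_combination ω^2*heq - E
    have n1 := sq_nonneg (ω*(φ 1).re-(φ 0).re*p 0)
    have n2 := sq_nonneg (ω*(φ 1).im-(φ 0).im*p 0)
    have n3 := sq_nonneg (ω*(φ 2).re-(φ 0).re*p 1)
    have n4 := sq_nonneg (ω*(φ 2).im-(φ 0).im*p 1)
    have n5 := sq_nonneg (ω*(φ 3).re-(φ 0).re*p 2)
    have n6 := sq_nonneg (ω*(φ 3).im-(φ 0).im*p 2)
    have sq0 : ∀ a : ℝ, a^2 = 0 → a = 0 := fun a h => pow_eq_zero_iff two_ne_zero |>.mp h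
    have q1 : (ω*(φ 1).re-(φ 0).re*p 0)^2 = 0 := le_antisymm (by linarith) (sq_nonneg _)
    have q2 : (ω*(φ 1).im-(φ 0).im*p 0)^2 = 0 := le_antisymm (by linarith) (sq_nonneg _)
    have q3 : (ω*(φ 2).re-(φ 0).re*p 1)^2 = 0 := le_antisymm (by linarith) (sq_nonneg _)
    have q4 : (ω*(φ 2).im-(φ 0).im*p 1)^2 = 0 := le_antisymm (by linarith) (sq_nonneg _)
    have q5 : (ω*(φ 3).re-(φ 0).re*p 2)^2 = 0 := le_antisymm (by linarith) (sq_nonneg _)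
    have q6 : (ω*(φ 3).im-(φ 0).im*p 2)^2 = 0 := le_antisymm (by linarith) (sq_nonneg _)
    have e1 : ω*(φ 1).re = (φ 0).re*p 0 := by have := sq0 _ q1; linarith
    have e2 : ω*(φ 1).im = (φ 0).im*p 0 := by have := sq0 _ q2; linarith
    have e3 : ω*(φ 2).re = (φ 0).re*p 1 := by have := sq0 _ q3; linarith
    have e4 : ω*(φ 2).im = (φ 0).im*p 1 := by have := sq0 _ q4; linarith
    have e5 : ω*(φ 3).re = (φ 0).re*p 2 := by have := sq0 _ q5; linarith
    have e6 : ω*(φ 3).im = (φ 0).im*p 2 := by have := sq0 _ q6; linarith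
    have hmul : ∀ i : Fin 3, (ω : ℂ) * φ i.succ = φ 0 * (p i : ℂ) := by
      intro j
      fin_cases j <;>
      · apply Complex.ext <;>
          simp [show (0:Fin 3).succ = 1 from rfl, show (1:Fin 3).succ = 2 from rfl,
            show (2:Fin 3).succ = 3 from rfl, Complex.mul_re, Complex.mul_im] <;> linarith
    have hωC : (ω : ℂ) ≠ 0 := by exact_mod_cast hω
    field_simp
    linear_combination hmul i
lemma omega_meas : Measurable (omegaM 0) := by unfold omegaM; fun_prop

lemma omega_ne_zero_ae : ∀ᵐ p ∂(muM 0), omegaM 0 p ≠ 0 := by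
  have hvol : ∀ᵐ p ∂(volume : Measure (Fin 3 → ℝ)), omegaM 0 p ≠ 0 := by
    rw [ae_iff]
    refine measure_mono_null (fun p hp => ?_) (measure_singleton (0 : Fin 3 → ℝ))
    simp only [Set.mem_setOf_eq, not_not] at hp
    have h0 : (∑ i, p i ^ 2) + (0:ℝ)^2 ≤ 0 := Real.sqrt_eq_zero'.mp hp
    have hsum : ∑ i, p i ^ 2 ≤ 0 := by simpa using h0
    have hall : ∀ i, p i = 0 := by
      intro i
      have h1 : p i ^ 2 ≤ 0 := by
        have h2 : p i ^ 2 ≤ ∑ j, p j ^ 2 := by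
          simpa using Finset.single_le_sum (f := fun j => p j ^ 2)
            (fun j _ => sq_nonneg (p j)) (Finset.mem_univ i)
        linarith
      nlinarith [sq_nonneg (p i)]
    exact Set.mem_singleton_iff.mpr (funext hall)
  exact hvol.filter_mono (withDensity_absolutelyContinuous volume _).ae_le

lemma sq_int (f : (Fin 3 → ℝ) → ℂ) (h : MemLp f 2 (muM 0)) :
    Integrable (fun p => ‖f p‖ ^ 2) (muM 0) := by
  have := h.integrable_norm_rpow (by norm_num) (by norm_num)
  refine this.congr (Filter.Eventually.of_forall fun p => ?_)
  show _ = ‖f p‖ ^ 2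
  rw [show ENNReal.toReal 2 = ((2:ℕ):ℝ) by norm_num]
  simp only [Real.rpow_natCast]

lemma tau_zero (p : Fin 3 → ℝ) : tauM 0 p 0 = omegaM 0 p := rfl
lemma tau_one (p : Fin 3 → ℝ) : tauM 0 p 1 = p 0 := rfl
lemma tau_two (p : Fin 3 → ℝ) : tauM 0 p 2 = p 1 := rfl
lemma tau_three (p : Fin 3 → ℝ) : tauM 0 p 3 = p 2 := rfl

/-- Lemma 2.2 of the paper: for `φ ∈ H' ⊆ L²(ℝ³, μ₀; ℂ⁴)`, the Krein form `(φ,φ)`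
vanishes iff `φ_μ(p) = λ(p)·(τ₀(p))_μ` for a.e. `p`, for some measurable `λ : ℝ³ → ℂ`. -/
theorem krein_form_null_iff_proportional_to_momentum
    (φ : (Fin 3 → ℝ) → Fin 4 → ℂ)
    (hL2 : ∀ μidx : Fin 4, MemLp (fun p => φ p μidx) 2 (muM 0))
    (hH' : ∀ᵐ p ∂(muM 0),
      (omegaM 0 p : ℂ) * φ p 0 = ∑ i : Fin 3, (p i : ℂ) * φ p i.succ) :
    (∫ p, ((∑ i : Fin 3, ‖φ p i.succ‖ ^ 2)
        - ‖φ p 0‖ ^ 2) ∂(muM 0) = 0) ↔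
      ∃ lam : (Fin 3 → ℝ) → ℂ, Measurable lam ∧
        ∀ᵐ p ∂(muM 0), ∀ μidx : Fin 4, φ p μidx = lam p * (tauM 0 p μidx : ℂ) := by
  have hint : ∀ mu : Fin 4, Integrable (fun p => ‖φ p mu‖ ^ 2) (muM 0) :=
    fun mu => sq_int _ (hL2 mu)
  have hfint : Integrable (fun p => (∑ i : Fin 3, ‖φ p i.succ‖ ^ 2)
      - ‖φ p 0‖ ^ 2) (muM 0) := by
    have hsum : Integrable (fun p => ∑ i : Fin 3, ‖φ p i.succ‖ ^ 2) (muM 0) := by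
      have := integrable_finset_sum (μ := muM 0) (Finset.univ : Finset (Fin 3))
        (f := fun i p => ‖φ p i.succ‖ ^ 2) (fun i _ => hint i.succ)
      simpa using this
    exact hsum.sub (hint 0)
  constructor
  · intro hzero
    have hnonneg : 0 ≤ᵐ[muM 0] fun p => (∑ i : Fin 3, ‖φ p i.succ‖ ^ 2)
        - ‖φ p 0‖ ^ 2 := by
      filter_upwards [omega_ne_zero_ae, hH'] with p h1 h2
      have hk := (keyC p (φ p) h1 h2).1
      simp only [Pi.zero_apply]
      linarith
    have h0 := (integral_eq_zero_iff_of_nonneg_ae hnonneg hfint).mp hzero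
    refine ⟨fun p => (hL2 0).1.mk _ p / (omegaM 0 p : ℂ), ?_, ?_⟩
    · exact ((hL2 0).1.stronglyMeasurable_mk.measurable).div
        (Complex.measurable_ofReal.comp omega_meas)
    · filter_upwards [omega_ne_zero_ae, hH', h0, (hL2 0).1.ae_eq_mk] with p h1 h2 h3 h4
      have h3' : (∑ i : Fin 3, ‖φ p i.succ‖ ^ 2) - ‖φ p 0‖ ^ 2 = 0 := by
        simpa using h3
      have hK := (keyC p (φ p) h1 h2).2 h3'
      have hl : (hL2 0).1.mk _ p / (omegaM 0 p : ℂ) = φ p 0 / (omegaM 0 p : ℂ) := by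
        rw [← h4]
      have hωC : ((omegaM 0 p : ℝ) : ℂ) ≠ 0 := by exact_mod_cast h1
      intro μidx
      fin_cases μidx
      · show φ p 0 = _ * ((tauM 0 p 0 : ℝ) : ℂ)
        rw [hl, tau_zero]
        field_simp
      · show φ p 1 = _ * ((tauM 0 p 1 : ℝ) : ℂ)
        rw [hl, tau_one]
        have := hK 0
        simpa [show (0 : Fin 3).succ = 1 from rfl] using this
      · show φ p 2 = _ * ((tauM 0 p 2 : ℝ) : ℂ)
        rw [hl, tau_two]
        have := hK 1
        simpa [show (1 : Fin 3).succ = 2 from rfl] using this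
      · show φ p 3 = _ * ((tauM 0 p 3 : ℝ) : ℂ)
        rw [hl, tau_three]
        have := hK 2
        simpa [show (2 : Fin 3).succ = 3 from rfl] using this
  · rintro ⟨lam, hmeas, hae⟩
    have hzero : (fun p => (∑ i : Fin 3, ‖φ p i.succ‖ ^ 2)
        - ‖φ p 0‖ ^ 2) =ᵐ[muM 0] 0 := by
      filter_upwards [hae] with p hp
      have habs : ∀ x : ℝ, ‖lam p * (x : ℂ)‖ ^ 2
          = ‖lam p‖ ^ 2 * x ^ 2 := by
        intro x
        rw [norm_mul, mul_pow, Complex.norm_real, Real.norm_eq_abs, sq_abs]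
      simp only [Pi.zero_apply, Fin.sum_univ_three,
        show (0 : Fin 3).succ = 1 from rfl, show (1 : Fin 3).succ = 2 from rfl,
        show (2 : Fin 3).succ = 3 from rfl]
      rw [hp 0, hp 1, hp 2, hp 3, tau_zero, tau_one, tau_two, tau_three,
        habs, habs, habs, habs]
      linear_combination (‖lam p‖) ^ 2 * omega_sq p
    rw [integral_congr_ae hzero]
    simp
end
end

section
/- For every m ≥ 0, every a ∈ ℝ⁴ and every orthochronous Lorentz transformation Λ, the operator U_{a,Λ} on L²(ℝ³, μ_m; ℂ) defined by (U_{a,Λ}φ)(p) := exp(i·(a·τ_m(p))) · φ(f_{Λ⁻¹}(p)) — where a·τ_m(p) is the Minkowski product and f_{Λ⁻¹}(p) is the spatial part of Λ⁻¹.mulVec τ_m(p) — is an isometry of L²: ∫ |(U_{a,Λ}φ)(p)|² dμ_m(p) = ∫ |φ(p)|² dμ_m(p) for all φ ∈ L²(ℝ³, μ_m; ℂ). -/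
open MeasureTheory

noncomputable section

/-- The Minkowski metric matrix `η = diag(1, −1, −1, −1)`. -/
def eta : Matrix (Fin 4) (Fin 4) ℝ := Matrix.diagonal ![1, -1, -1, -1]

/-! ### Auxiliary algebraic lemmas -/

lemma eta_mul_eta : eta * eta = 1 := by
  ext i j
  fin_cases i <;> fin_cases j <;>
    simp (config := { decide := true }) [eta, Matrix.mul_apply, Fin.sum_univ_four,
      Matrix.diagonal, Matrix.one_apply]

lemma eta_transpose : eta.transpose = eta := Matrix.diagonal_transpose _

lemma mul_eta_eta (A : Matrix (Fin 4) (Fin 4) ℝ) : A * eta * eta = A := by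
  rw [Matrix.mul_assoc, eta_mul_eta, Matrix.mul_one]

variable {Λ : Matrix (Fin 4) (Fin 4) ℝ}

lemma N_mul_lam (hLor : Λ.transpose * eta * Λ = eta) : (eta * Λ.transpose * eta) * Λ = 1 := by
  have : (eta * Λ.transpose * eta) * Λ = eta * (Λ.transpose * eta * Λ) := by
    simp only [Matrix.mul_assoc]
  rw [this, hLor, eta_mul_eta]

lemma lam_mul_N (hLor : Λ.transpose * eta * Λ = eta) : Λ * (eta * Λ.transpose * eta) = 1 :=
  mul_eq_one_comm.mp (N_mul_lam hLor)

lemma lam_row (hLor : Λ.transpose * eta * Λ = eta) : Λ * eta * Λ.transpose = eta := by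
  have h : Λ * eta * Λ.transpose * eta = 1 := by
    have := lam_mul_N hLor; simp only [← Matrix.mul_assoc] at this; exact this
  have h2 := congrArg (· * eta) h
  change Λ * eta * Λ.transpose * eta * eta = 1 * eta at h2
  rwa [mul_eta_eta, Matrix.one_mul] at h2

lemma Nt_eq (Λ : Matrix (Fin 4) (Fin 4) ℝ) :
    (eta * Λ.transpose * eta).transpose = eta * Λ * eta := by
  simp only [Matrix.transpose_mul, eta_transpose, Matrix.transpose_transpose]
  simp only [← Matrix.mul_assoc]

lemma N_lorentz (hLor : Λ.transpose * eta * Λ = eta) :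
    (eta * Λ.transpose * eta).transpose * eta * (eta * Λ.transpose * eta) = eta := by
  rw [Nt_eq]
  have e1 : eta * Λ * eta * eta * (eta * Λ.transpose * eta)
      = (eta * Λ) * (eta * Λ.transpose) * eta := by
    rw [mul_eta_eta]; simp only [← Matrix.mul_assoc]
  rw [e1]
  have e2 : (eta * Λ) * (eta * Λ.transpose) = eta * (Λ * eta * Λ.transpose) := by
    simp only [Matrix.mul_assoc]
  rw [e2, lam_row hLor, eta_mul_eta, Matrix.one_mul]

lemma N_row (hLor : Λ.transpose * eta * Λ = eta) :
    (eta * Λ.transpose * eta) * eta * (eta * Λ.transpose * eta).transpose = eta := by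
  rw [Nt_eq]
  have e1 : eta * Λ.transpose * eta * eta * (eta * Λ * eta)
      = (eta * Λ.transpose) * (eta * Λ) * eta := by
    rw [mul_eta_eta]; simp only [← Matrix.mul_assoc]
  rw [e1]
  have e2 : (eta * Λ.transpose) * (eta * Λ) = eta * (Λ.transpose * eta * Λ) := by
    simp only [Matrix.mul_assoc]
  rw [e2, hLor, eta_mul_eta, Matrix.one_mul]

lemma lorentz_entry {M : Matrix (Fin 4) (Fin 4) ℝ} (hM : M.transpose * eta * M = eta) (j k : Fin 4) :
    M 0 j * M 0 k - M 1 j * M 1 k - M 2 j * M 2 k - M 3 j * M 3 k = eta j k := by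
  have h := congrFun (congrFun hM j) k
  simp only [Matrix.mul_apply, Matrix.transpose_apply, Fin.sum_univ_four, eta,
    Matrix.diagonal] at h ⊢
  simp (config := { decide := true }) at h ⊢
  linarith

lemma mink_mulVec {M : Matrix (Fin 4) (Fin 4) ℝ} (hM : M.transpose * eta * M = eta) (x y : Fin 4 → ℝ) :
    mink (M.mulVec x) (M.mulVec y) = mink x y := by
  have h00 := lorentz_entry hM 0 0
  have h01 := lorentz_entry hM 0 1
  have h02 := lorentz_entry hM 0 2
  have h03 := lorentz_entry hM 0 3
  have h11 := lorentz_entry hM 1 1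
  have h12 := lorentz_entry hM 1 2
  have h13 := lorentz_entry hM 1 3
  have h22 := lorentz_entry hM 2 2
  have h23 := lorentz_entry hM 2 3
  have h33 := lorentz_entry hM 3 3
  simp (config := { decide := true }) [eta, Matrix.diagonal] at h00 h01 h02 h03 h11 h12 h13 h22 h23 h33
  simp only [mink, Matrix.mulVec, dotProduct, Fin.sum_univ_four]
  linear_combination x 0 * y 0 * h00 + (x 0 * y 1 + x 1 * y 0) * h01 + (x 0 * y 2 + x 2 * y 0) * h02 +
    (x 0 * y 3 + x 3 * y 0) * h03 + x 1 * y 1 * h11 + (x 1 * y 2 + x 2 * y 1) * h12 +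
    (x 1 * y 3 + x 3 * y 1) * h13 + x 2 * y 2 * h22 + (x 2 * y 3 + x 3 * y 2) * h23 + x 3 * y 3 * h33

set_option maxHeartbeats 1000000 in
lemma det_block (A : Matrix (Fin 4) (Fin 4) ℝ) (v : Fin 3 → ℝ) :
    Matrix.det (Matrix.of fun i j : Fin 3 => A i.succ 0 * v j + A i.succ j.succ)
      = A.adjugate 0 0 - v 0 * A.adjugate 1 0 - v 1 * A.adjugate 2 0 - v 2 * A.adjugate 3 0 := by
  have e0 : ((0 : Fin 3).succ) = (1 : Fin 4) := rfl
  have e1 : ((1 : Fin 3).succ) = (2 : Fin 4) := rfl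
  have e2 : ((2 : Fin 3).succ) = (3 : Fin 4) := rfl
  simp only [Matrix.det_fin_three, Matrix.of_apply, e0, e1, e2, Matrix.adjugate_apply]
  simp (config := { decide := true }) [Matrix.det_succ_row_zero, Fin.sum_univ_succ,
    Matrix.updateRow_apply, Pi.single_apply, Matrix.submatrix_apply, Fin.succAbove,
    Fin.succ_zero_eq_one, Fin.succ_one_eq_two, show (Fin.succ 2 : Fin 4) = 3 from rfl,
    show (Fin.castSucc 2 : Fin 4) = 2 from rfl]
  ring

/-! ### omega / tau lemmas -/

lemma omegaM_nonneg (m : ℝ) (p : Fin 3 → ℝ) : 0 ≤ omegaM m p := Real.sqrt_nonneg _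

lemma omegaM_sq (m : ℝ) (p : Fin 3 → ℝ) :
    omegaM m p ^ 2 = p 0 ^ 2 + p 1 ^ 2 + p 2 ^ 2 + m ^ 2 := by
  rw [omegaM, Real.sq_sqrt (by positivity), Fin.sum_univ_three]

lemma mink_tau (m : ℝ) (p : Fin 3 → ℝ) : mink (tauM m p) (tauM m p) = m ^ 2 := by
  have h := omegaM_sq m p
  simp only [mink, tauM, Matrix.cons_val_zero, Matrix.cons_val_one, Matrix.head_cons,
    Matrix.cons_val_two, Matrix.tail_cons, Matrix.cons_val_three]
  nlinarith [h]

lemma zeroth_pos {W : Matrix (Fin 4) (Fin 4) ℝ}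
    (hrow : W 0 0 * W 0 0 - W 0 1 * W 0 1 - W 0 2 * W 0 2 - W 0 3 * W 0 3 = 1)
    (hW : 0 < W 0 0) {m : ℝ} (p : Fin 3 → ℝ) (hp : 0 < omegaM m p) :
    0 < W.mulVec (tauM m p) 0 := by
  have hsq := omegaM_sq m p
  set ω := omegaM m p with hω
  have hval : W.mulVec (tauM m p) 0
      = W 0 0 * ω + W 0 1 * p 0 + W 0 2 * p 1 + W 0 3 * p 2 := by
    simp [Matrix.mulVec, dotProduct, Fin.sum_univ_four, tauM, hω]
  rw [hval]
  have hCS : (W 0 1 * p 0 + W 0 2 * p 1 + W 0 3 * p 2) ^ 2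
      ≤ (W 0 1 ^ 2 + W 0 2 ^ 2 + W 0 3 ^ 2) * (p 0 ^ 2 + p 1 ^ 2 + p 2 ^ 2) := by
    nlinarith [sq_nonneg (W 0 1 * p 1 - W 0 2 * p 0), sq_nonneg (W 0 1 * p 2 - W 0 3 * p 0),
      sq_nonneg (W 0 2 * p 2 - W 0 3 * p 1)]
  by_contra hcon
  push_neg at hcon
  nlinarith [hCS, mul_pos hW hp, sq_nonneg m, sq_nonneg ω, mul_pos hp hp,
    sq_nonneg (W 0 0 * ω)]

lemma mulVec_tau_nonneg {W : Matrix (Fin 4) (Fin 4) ℝ}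
    (hrow : W 0 0 * W 0 0 - W 0 1 * W 0 1 - W 0 2 * W 0 2 - W 0 3 * W 0 3 = 1)
    (hW : 0 < W 0 0) {m : ℝ} (p : Fin 3 → ℝ) :
    0 ≤ W.mulVec (tauM m p) 0 := by
  rcases (omegaM_nonneg m p).lt_or_eq with h | h
  · exact (zeroth_pos hrow hW p h).le
  · have hsq := omegaM_sq m p
    rw [← h] at hsq
    have hp0 : p 0 = 0 := by nlinarith [sq_nonneg (p 0), sq_nonneg (p 1), sq_nonneg (p 2), sq_nonneg m]
    have hp1 : p 1 = 0 := by nlinarith [sq_nonneg (p 0), sq_nonneg (p 1), sq_nonneg (p 2), sq_nonneg m]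
    have hp2 : p 2 = 0 := by nlinarith [sq_nonneg (p 0), sq_nonneg (p 1), sq_nonneg (p 2), sq_nonneg m]
    have hval : W.mulVec (tauM m p) 0
        = W 0 0 * omegaM m p + W 0 1 * p 0 + W 0 2 * p 1 + W 0 3 * p 2 := by
      simp [Matrix.mulVec, dotProduct, Fin.sum_univ_four, tauM]
    rw [hval, ← h, hp0, hp1, hp2]
    ring_nf
    simp

lemma tau_fix {W : Matrix (Fin 4) (Fin 4) ℝ} (hM : W.transpose * eta * W = eta)
    (hrow : W 0 0 * W 0 0 - W 0 1 * W 0 1 - W 0 2 * W 0 2 - W 0 3 * W 0 3 = 1)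
    (hW : 0 < W 0 0) {m : ℝ} (p : Fin 3 → ℝ) :
    W.mulVec (tauM m p) = tauM m (fun i => W.mulVec (tauM m p) i.succ) := by
  have hx0 : 0 ≤ W.mulVec (tauM m p) 0 := mulVec_tau_nonneg hrow hW p
  have hmink : mink (W.mulVec (tauM m p)) (W.mulVec (tauM m p)) = m ^ 2 := by
    rw [mink_mulVec hM]; exact mink_tau m p
  set x := W.mulVec (tauM m p) with hx
  have hsq : x 0 ^ 2 = x 1 ^ 2 + x 2 ^ 2 + x 3 ^ 2 + m ^ 2 := by
    simp only [mink] at hmink; nlinarith [hmink]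
  funext j
  fin_cases j
  · show x 0 = tauM m (fun i => x i.succ) 0
    simp only [tauM, Matrix.cons_val_zero, omegaM, Fin.sum_univ_three]
    have e0 : ((0 : Fin 3).succ) = (1 : Fin 4) := rfl
    have e1 : ((1 : Fin 3).succ) = (2 : Fin 4) := rfl
    have e2 : ((2 : Fin 3).succ) = (3 : Fin 4) := rfl
    rw [e0, e1, e2, ← hsq, Real.sqrt_sq hx0]
  · rfl
  · rfl
  · rfl

/-! ### Derivative -/

def Dmat (W : Matrix (Fin 4) (Fin 4) ℝ) (m : ℝ) (p : Fin 3 → ℝ) : Matrix (Fin 3) (Fin 3) ℝ :=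
  Matrix.of fun i j => W i.succ 0 * (p j / omegaM m p) + W i.succ j.succ

def prj (i : Fin 3) : (Fin 3 → ℝ) →L[ℝ] ℝ := ContinuousLinearMap.proj i

lemma hasFDerivAt_sq (i : Fin 3) (p : Fin 3 → ℝ) :
    HasFDerivAt (fun q : Fin 3 → ℝ => q i ^ 2) ((2 * p i) • prj i) p := by
  have h := (hasFDerivAt_apply (𝕜 := ℝ) i p).mul (hasFDerivAt_apply (𝕜 := ℝ) i p)
  have h2 : (fun q : Fin 3 → ℝ => q i * q i) = fun q => q i ^ 2 := by funext q; ring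
  change HasFDerivAt (fun q : Fin 3 → ℝ => q i * q i) _ p at h
  rw [h2] at h
  refine h.congr_fderiv ?_
  ext v
  show p i * v i + p i * v i = 2 * p i * v i
  ring

lemma hasFDerivAt_omega (m : ℝ) (p : Fin 3 → ℝ) (hp : omegaM m p ≠ 0) :
    HasFDerivAt (omegaM m)
      ((1 / (2 * omegaM m p)) •
        ((2 * p 0) • prj 0 + (2 * p 1) • prj 1 + (2 * p 2) • prj 2)) p := by
  have hsum : (fun q : Fin 3 → ℝ => (∑ i, q i ^ 2) + m ^ 2)
      = fun q => q 0 ^ 2 + (q 1 ^ 2 + (q 2 ^ 2 + m ^ 2)) := by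
    funext q; rw [Fin.sum_univ_three]; ring
  have harg : ((∑ i, p i ^ 2) + m ^ 2) ≠ 0 := by
    intro h; exact hp (by rw [omegaM, h, Real.sqrt_zero])
  have hq : HasFDerivAt (fun q : Fin 3 → ℝ => (∑ i, q i ^ 2) + m ^ 2)
      ((2 * p 0) • prj 0 + (2 * p 1) • prj 1 + (2 * p 2) • prj 2) p := by
    rw [hsum]
    have h := (hasFDerivAt_sq 0 p).add ((hasFDerivAt_sq 1 p).add ((hasFDerivAt_sq 2 p).add_const (m ^ 2)))
    refine h.congr_fderiv ?_
    ext v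
    simp [prj]
    ring
  exact hq.sqrt harg

lemma hasFDerivAt_fmap (W : Matrix (Fin 4) (Fin 4) ℝ) (m : ℝ) (p : Fin 3 → ℝ)
    (hp : omegaM m p ≠ 0) :
    HasFDerivAt (fun q i => W.mulVec (tauM m q) i.succ)
      ((Matrix.toLin' (Dmat W m p)).toContinuousLinearMap) p := by
  rw [hasFDerivAt_pi']
  intro i
  have hcoord : (fun q : Fin 3 → ℝ => W.mulVec (tauM m q) i.succ)
      = fun q => W i.succ 0 * omegaM m q +
          (W i.succ 1 * q 0 + (W i.succ 2 * q 1 + W i.succ 3 * q 2)) := by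
    funext q
    simp [Matrix.mulVec, dotProduct, Fin.sum_univ_four, tauM]
    ring
  rw [hcoord]
  have h1 : HasFDerivAt (fun q : Fin 3 → ℝ => W i.succ 1 * q 0 + (W i.succ 2 * q 1 + W i.succ 3 * q 2))
      ((W i.succ 1) • prj 0 + ((W i.succ 2) • prj 1 + (W i.succ 3) • prj 2)) p := by
    have h0 := (hasFDerivAt_apply (𝕜 := ℝ) (0 : Fin 3) p).const_mul (W i.succ 1)
    have ha := (hasFDerivAt_apply (𝕜 := ℝ) (1 : Fin 3) p).const_mul (W i.succ 2)
    have hb := (hasFDerivAt_apply (𝕜 := ℝ) (2 : Fin 3) p).const_mul (W i.succ 3)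
    exact h0.add (ha.add hb)
  have h := ((hasFDerivAt_omega m p hp).const_mul (W i.succ 0)).add h1
  refine h.congr_fderiv ?_
  ext v
  simp [prj, Matrix.toLin'_apply, Matrix.mulVec, dotProduct, Fin.sum_univ_three, Dmat,
    ContinuousLinearMap.proj, show (Fin.succ 0 : Fin 4) = 1 from rfl, show (Fin.succ 1 : Fin 4) = 2 from rfl,
    show (Fin.succ 2 : Fin 4) = 3 from rfl]
  field_simp
  ring
lemma omegaM_continuous (m : ℝ) : Continuous (omegaM m) := by
  have h : Continuous fun p : Fin 3 → ℝ => (∑ i, p i ^ 2) + m ^ 2 := by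
    exact ((continuous_finset_sum _ fun i _ => (continuous_apply i).pow 2)).add continuous_const
  exact Real.continuous_sqrt.comp h

lemma fmap_continuous (W : Matrix (Fin 4) (Fin 4) ℝ) (m : ℝ) :
    Continuous (fun q (i : Fin 3) => W.mulVec (tauM m q) i.succ) := by
  refine continuous_pi fun i => ?_
  have : (fun q : Fin 3 → ℝ => W.mulVec (tauM m q) i.succ)
      = fun q => W i.succ 0 * omegaM m q +
          (W i.succ 1 * q 0 + (W i.succ 2 * q 1 + W i.succ 3 * q 2)) := by
    funext q
    simp [Matrix.mulVec, dotProduct, Fin.sum_univ_four, tauM]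
    ring
  rw [this]
  exact (continuous_const.mul (omegaM_continuous m)).add
    ((continuous_const.mul (continuous_apply 0)).add
      ((continuous_const.mul (continuous_apply 1)).add (continuous_const.mul (continuous_apply 2))))

lemma eta_det : eta.det = -1 := by
  simp (config := { decide := true }) [eta, Matrix.det_diagonal, Fin.prod_univ_four]

lemma abs_det_one {W : Matrix (Fin 4) (Fin 4) ℝ} (hM : W.transpose * eta * W = eta) :
    |W.det| = 1 := by
  have h := congrArg Matrix.det hM
  rw [Matrix.det_mul, Matrix.det_mul, Matrix.det_transpose, eta_det] at h
  have h2 : W.det ^ 2 = 1 := by nlinarith [h]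
  have := abs_nonneg W.det
  nlinarith [sq_abs W.det]
lemma tauM_succ (m : ℝ) (p : Fin 3 → ℝ) (i : Fin 3) : tauM m p i.succ = p i := by
  fin_cases i <;> rfl

set_option maxHeartbeats 2000000 in
lemma key_lintegral {Λ : Matrix (Fin 4) (Fin 4) ℝ} (hLor : Λ.transpose * eta * Λ = eta)
    (hOrth : 0 < Λ 0 0) {m : ℝ} (g : (Fin 3 → ℝ) → ENNReal) :
    ∫⁻ p, g (fun i : Fin 3 => (eta * Λ.transpose * eta).mulVec (tauM m p) i.succ) ∂(muM m)
      = ∫⁻ q, g q ∂(muM m) := by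
  set N := eta * Λ.transpose * eta with hNdef
  have hNcol : N.transpose * eta * N = eta := N_lorentz hLor
  have hNrowM : N * eta * N.transpose = eta := N_row hLor
  have hLrowM : Λ * eta * Λ.transpose = eta := lam_row hLor
  have hNrow : N 0 0 * N 0 0 - N 0 1 * N 0 1 - N 0 2 * N 0 2 - N 0 3 * N 0 3 = 1 := by
    have h := lorentz_entry (M := N.transpose)
      (by rw [Matrix.transpose_transpose]; exact hNrowM) 0 0
    simp only [Matrix.transpose_apply] at h
    simpa [eta, Matrix.diagonal] using h
  have hLrow : Λ 0 0 * Λ 0 0 - Λ 0 1 * Λ 0 1 - Λ 0 2 * Λ 0 2 - Λ 0 3 * Λ 0 3 = 1 := by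
    have h := lorentz_entry (M := Λ.transpose)
      (by rw [Matrix.transpose_transpose]; exact hLrowM) 0 0
    simp only [Matrix.transpose_apply] at h
    simpa [eta, Matrix.diagonal] using h
  have hN00 : N 0 0 = Λ 0 0 := by
    simp (config := { decide := true }) [hNdef, eta, Matrix.mul_apply, Fin.sum_univ_four,
      Matrix.diagonal, Matrix.transpose_apply]
  have hN01 : N 0 1 = -Λ 1 0 := by
    simp (config := { decide := true }) [hNdef, eta, Matrix.mul_apply, Fin.sum_univ_four,
      Matrix.diagonal, Matrix.transpose_apply]
  have hN02 : N 0 2 = -Λ 2 0 := by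
    simp (config := { decide := true }) [hNdef, eta, Matrix.mul_apply, Fin.sum_univ_four,
      Matrix.diagonal, Matrix.transpose_apply]
  have hN03 : N 0 3 = -Λ 3 0 := by
    simp (config := { decide := true }) [hNdef, eta, Matrix.mul_apply, Fin.sum_univ_four,
      Matrix.diagonal, Matrix.transpose_apply]
  have hN00pos : 0 < N 0 0 := by rw [hN00]; exact hOrth
  set F := fun q (i : Fin 3) => N.mulVec (tauM m q) i.succ with hFdef
  set G := fun q (i : Fin 3) => Λ.mulVec (tauM m q) i.succ with hGdef
  have htauN : ∀ p, N.mulVec (tauM m p) = tauM m (F p) := fun p => tau_fix hNcol hNrow hN00pos p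
  have htauL : ∀ p, Λ.mulVec (tauM m p) = tauM m (G p) := fun p => tau_fix hLor hLrow hOrth p
  have hGF : ∀ p, G (F p) = p := by
    intro p
    funext i
    show Λ.mulVec (tauM m (F p)) i.succ = p i
    rw [← htauN, Matrix.mulVec_mulVec (tauM m p) Λ N, lam_mul_N hLor, Matrix.one_mulVec, tauM_succ]
  have hFG : ∀ p, F (G p) = p := by
    intro p
    funext i
    show N.mulVec (tauM m (G p)) i.succ = p i
    rw [← htauL, Matrix.mulVec_mulVec (tauM m p) N Λ, N_mul_lam hLor, Matrix.one_mulVec, tauM_succ]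
  have hωF : ∀ p, omegaM m (F p) = N.mulVec (tauM m p) 0 := by
    intro p
    have := congrFun (htauN p) 0
    rw [this]; rfl
  have hωG : ∀ p, omegaM m (G p) = Λ.mulVec (tauM m p) 0 := by
    intro p
    have := congrFun (htauL p) 0
    rw [this]; rfl
  set s : Set (Fin 3 → ℝ) := {p | 0 < omegaM m p} with hsdef
  have hs : MeasurableSet s := (isOpen_lt continuous_const (omegaM_continuous m)).measurableSet
  have hcompl : (volume : Measure (Fin 3 → ℝ)) sᶜ = 0 := by
    have hsub : sᶜ ⊆ {(0 : Fin 3 → ℝ)} := by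
      intro p hp
      simp only [hsdef, Set.mem_compl_iff, Set.mem_setOf_eq, not_lt] at hp
      have h0 : omegaM m p = 0 := le_antisymm hp (omegaM_nonneg m p)
      have hsq := omegaM_sq m p
      rw [h0] at hsq
      have hp0 : p 0 = 0 := by nlinarith [sq_nonneg (p 0), sq_nonneg (p 1), sq_nonneg (p 2), sq_nonneg m]
      have hp1 : p 1 = 0 := by nlinarith [sq_nonneg (p 0), sq_nonneg (p 1), sq_nonneg (p 2), sq_nonneg m]
      have hp2 : p 2 = 0 := by nlinarith [sq_nonneg (p 0), sq_nonneg (p 1), sq_nonneg (p 2), sq_nonneg m]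
      have : p = 0 := by
        funext i; fin_cases i <;> assumption
      simp [this]
    exact measure_mono_null hsub (measure_singleton 0)
  have hae : ∀ᵐ x ∂(volume : Measure (Fin 3 → ℝ)), x ∈ s := by
    rw [MeasureTheory.ae_iff]
    exact hcompl
  have hres : (volume : Measure (Fin 3 → ℝ)).restrict s = volume :=
    Measure.restrict_eq_self_of_ae_mem hae
  -- maps to
  have hFs : ∀ p ∈ s, F p ∈ s := by
    intro p hp
    have := zeroth_pos hNrow hN00pos p hp
    simpa [hsdef, Set.mem_setOf_eq, hωF p] using this
  have hGs : ∀ p ∈ s, G p ∈ s := by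
    intro p hp
    have := zeroth_pos hLrow hOrth p hp
    simpa [hsdef, Set.mem_setOf_eq, hωG p] using this
  have himage : F '' s = s := by
    apply Set.Subset.antisymm
    · rintro q ⟨p, hp, rfl⟩; exact hFs p hp
    · intro q hq; exact ⟨G q, hGs q hq, hFG q⟩
  have hinj : Set.InjOn F s := (Function.LeftInverse.injective hGF).injOn
  -- derivative
  have hderiv : ∀ p ∈ s, HasFDerivWithinAt F
      ((Matrix.toLin' (Dmat N m p)).toContinuousLinearMap) s p := fun p hp =>
    (hasFDerivAt_fmap N m p (ne_of_gt hp)).hasFDerivWithinAt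
  -- determinant value
  have hdet : ∀ p ∈ s, |((Matrix.toLin' (Dmat N m p)).toContinuousLinearMap).det|
      = omegaM m (F p) / omegaM m p := by
    intro p hp
    have hω : (0 : ℝ) < omegaM m p := hp
    have hx0 : 0 < N.mulVec (tauM m p) 0 := zeroth_pos hNrow hN00pos p hp
    have hclm : ((Matrix.toLin' (Dmat N m p)).toContinuousLinearMap).det = (Dmat N m p).det := by
      rw [ContinuousLinearMap.det]
      simp only [LinearMap.coe_toContinuousLinearMap]
      exact LinearMap.det_toLin' _
    have hadj : N.adjugate = N.det • Λ := by
      have h1 : N.adjugate * (N * Λ) = N.adjugate := by rw [N_mul_lam hLor, Matrix.mul_one]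
      calc N.adjugate = N.adjugate * (N * Λ) := h1.symm
        _ = N.adjugate * N * Λ := (Matrix.mul_assoc _ _ _).symm
        _ = (N.det • (1 : Matrix (Fin 4) (Fin 4) ℝ)) * Λ := by rw [Matrix.adjugate_mul]
        _ = N.det • Λ := by rw [Matrix.smul_mul, Matrix.one_mul]
    have hadj0 : N.adjugate 0 0 = N.det * Λ 0 0 := by rw [hadj]; simp
    have hadj1 : N.adjugate 1 0 = N.det * Λ 1 0 := by rw [hadj]; simp
    have hadj2 : N.adjugate 2 0 = N.det * Λ 2 0 := by rw [hadj]; simp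
    have hadj3 : N.adjugate 3 0 = N.det * Λ 3 0 := by rw [hadj]; simp
    have hval : N.mulVec (tauM m p) 0
        = N 0 0 * omegaM m p + N 0 1 * p 0 + N 0 2 * p 1 + N 0 3 * p 2 := by
      simp [Matrix.mulVec, dotProduct, Fin.sum_univ_four, tauM]
    have hdetD : (Dmat N m p).det = N.det * (N.mulVec (tauM m p) 0) / omegaM m p := by
      have hb := det_block N (fun j => p j / omegaM m p)
      have heq : Dmat N m p
          = Matrix.of fun i j : Fin 3 =>
              N i.succ 0 * ((fun j => p j / omegaM m p) j) + N i.succ j.succ := rfl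
      rw [heq, hb, hadj0, hadj1, hadj2, hadj3, hval, hN00, hN01, hN02, hN03]
      field_simp
      ring
    rw [hclm, hdetD, hωF p]
    rw [abs_div, abs_mul, abs_det_one hNcol, one_mul, abs_of_pos hx0, abs_of_pos hω]
  -- the density
  set dens : (Fin 3 → ℝ) → ENNReal := fun p => ENNReal.ofReal (1 / (2 * omegaM m p)) with hdens
  have hdensmeas : Measurable dens :=
    ENNReal.measurable_ofReal.comp
      (measurable_const.div ((measurable_const.mul (omegaM_continuous m).measurable)))
  have hfin : ∀ᵐ x ∂(volume : Measure (Fin 3 → ℝ)), dens x < ⊤ :=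
    Filter.Eventually.of_forall fun x => ENNReal.ofReal_lt_top
  have hμ : ∀ h : (Fin 3 → ℝ) → ENNReal, ∫⁻ x, h x ∂(muM m) = ∫⁻ x in s, dens x * h x ∂volume := by
    intro h
    rw [muM, lintegral_withDensity_eq_lintegral_mul_non_measurable _ hdensmeas hfin]
    conv_rhs => rw [hres]
    rfl
  rw [hμ, hμ]
  have hstep : ∫⁻ x in s, dens x * g (F x) ∂volume
      = ∫⁻ x in s, ENNReal.ofReal |((Matrix.toLin' (Dmat N m x)).toContinuousLinearMap).det|
          * (dens (F x) * g (F x)) ∂volume := by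
    apply setLIntegral_congr_fun hs
    intro x hx
    have hω : (0 : ℝ) < omegaM m x := hx
    have hωF' : (0 : ℝ) < omegaM m (F x) := hFs x hx
    beta_reduce
    rw [hdet x hx, ← mul_assoc, ← ENNReal.ofReal_mul (by positivity)]
    show ENNReal.ofReal (1 / (2 * omegaM m x)) * g (F x) = _
    congr 2
    rw [div_mul_div_comm]
    rw [div_eq_div_iff (by positivity) (by positivity)]
    ring
  have himg := lintegral_image_eq_lintegral_abs_det_fderiv_mul volume hs hderiv hinj
    (fun q => dens q * g q)
  rw [himage] at himg
  exact hstep.trans himg.symm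
/-- The scalar-field representation operator
`(U_{a,Λ}φ)(p) = exp(i a·τ_m(p)) φ(spatial part of Λ⁻¹·τ_m(p))` is an isometry of
`L²(ℝ³, μ_m; ℂ)`. -/
theorem scalar_representation_isometry
    (m : ℝ) (hm : 0 ≤ m) (a : Fin 4 → ℝ) (Λ : Matrix (Fin 4) (Fin 4) ℝ)
    (hLor : Λ.transpose * eta * Λ = eta) (hOrth : 0 < Λ 0 0)
    (φ : (Fin 3 → ℝ) → ℂ) (hφ : MemLp φ 2 (muM m)) :
    ∫ p, ‖Complex.exp (Complex.I * (mink a (tauM m p) : ℂ)) *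
          φ (fun i : Fin 3 => (Λ⁻¹).mulVec (tauM m p) i.succ)‖ ^ 2 ∂(muM m)
      = ∫ p, ‖φ p‖ ^ 2 ∂(muM m) := by
  have hinv : Λ⁻¹ = eta * Λ.transpose * eta := Matrix.inv_eq_left_inv (N_mul_lam hLor)
  have hphase : (fun p => ‖Complex.exp (Complex.I * (mink a (tauM m p) : ℂ)) *
          φ (fun i : Fin 3 => (Λ⁻¹).mulVec (tauM m p) i.succ)‖ ^ 2)
      = fun p => ‖
          (φ (fun i : Fin 3 => (eta * Λ.transpose * eta).mulVec (tauM m p) i.succ))‖ ^ 2 := by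
    funext p
    rw [hinv, norm_mul, Complex.norm_exp]
    simp [Complex.mul_re]
  rw [hphase]
  have hFmeas : Measurable
      (fun p => (fun i : Fin 3 => (eta * Λ.transpose * eta).mulVec (tauM m p) i.succ)) :=
    (fmap_continuous (eta * Λ.transpose * eta) m).measurable
  obtain ⟨ψ, hψmeas, haeψ⟩ := hφ.1
  have hnull : muM m {x | ¬ φ x = ψ x} = 0 := by
    rw [← MeasureTheory.ae_iff]; exact haeψ
  obtain ⟨E', hsub, hE'meas, hE'0⟩ := exists_measurable_superset_of_null hnull
  have hpre : muM m ((fun p => (fun i : Fin 3 =>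
      (eta * Λ.transpose * eta).mulVec (tauM m p) i.succ)) ⁻¹' E') = 0 := by
    have hind : ∀ p : Fin 3 → ℝ,
        ((fun p => (fun i : Fin 3 =>
          (eta * Λ.transpose * eta).mulVec (tauM m p) i.succ)) ⁻¹' E').indicator
            (fun _ => (1 : ENNReal)) p
        = E'.indicator (fun _ => (1 : ENNReal))
            (fun i : Fin 3 => (eta * Λ.transpose * eta).mulVec (tauM m p) i.succ) := by
      intro p
      by_cases h : (fun i : Fin 3 => (eta * Λ.transpose * eta).mulVec (tauM m p) i.succ) ∈ E' <;>
        simp [Set.indicator, h, Set.mem_preimage]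
    calc muM m ((fun p => (fun i : Fin 3 =>
          (eta * Λ.transpose * eta).mulVec (tauM m p) i.succ)) ⁻¹' E')
        = ∫⁻ p, ((fun p => (fun i : Fin 3 =>
            (eta * Λ.transpose * eta).mulVec (tauM m p) i.succ)) ⁻¹' E').indicator
              (fun _ => (1 : ENNReal)) p ∂(muM m) := by
          rw [lintegral_indicator_const (hFmeas hE'meas), one_mul]
      _ = ∫⁻ p, E'.indicator (fun _ => (1 : ENNReal))
            (fun i : Fin 3 => (eta * Λ.transpose * eta).mulVec (tauM m p) i.succ) ∂(muM m) :=
          lintegral_congr hind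
      _ = ∫⁻ q, E'.indicator (fun _ => (1 : ENNReal)) q ∂(muM m) :=
          key_lintegral hLor hOrth _
      _ = muM m E' := by rw [lintegral_indicator_const hE'meas, one_mul]
      _ = 0 := hE'0
  have hae2 : (fun p => φ (fun i : Fin 3 => (eta * Λ.transpose * eta).mulVec (tauM m p) i.succ))
      =ᵐ[muM m]
      (fun p => ψ (fun i : Fin 3 => (eta * Λ.transpose * eta).mulVec (tauM m p) i.succ)) := by
    rw [Filter.EventuallyEq, MeasureTheory.ae_iff]
    refine measure_mono_null ?_ hpre
    intro p hp
    exact hsub hp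
  have hAESM : AEStronglyMeasurable
      (fun p => φ (fun i : Fin 3 => (eta * Λ.transpose * eta).mulVec (tauM m p) i.succ))
      (muM m) :=
    ⟨fun p => ψ (fun i : Fin 3 => (eta * Λ.transpose * eta).mulVec (tauM m p) i.succ),
      hψmeas.comp_measurable hFmeas, hae2⟩
  have conv : ∀ u : (Fin 3 → ℝ) → ℂ, AEStronglyMeasurable u (muM m) →
      ∫ p, ‖u p‖ ^ 2 ∂(muM m)
        = (∫⁻ p, ENNReal.ofReal (‖u p‖ ^ 2) ∂(muM m)).toReal := by
    intro u hu
    rw [integral_eq_lintegral_of_nonneg_ae]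
    · exact Filter.Eventually.of_forall fun p => sq_nonneg _
    · exact (continuous_pow 2).comp_aestronglyMeasurable hu.norm
  rw [conv _ hAESM, conv _ ⟨ψ, hψmeas, haeψ⟩]
  congr 1
  exact key_lintegral hLor hOrth (fun q => ENNReal.ofReal (‖φ q‖ ^ 2))
end
end

section
/- For every a ∈ ℝ⁴ and every orthochronous Lorentz transformation Λ, the operator U_{a,Λ} on L²(ℝ³, μ₀; ℂ⁴) defined by (U_{a,Λ}φ)(p) := exp(i·(a·τ₀(p))) · Λ.mulVec(φ(f_{Λ⁻¹}(p))) — where Λ acts on ℂ⁴ through its real entries and f_{Λ⁻¹}(p) is the spatial part of Λ⁻¹.mulVec τ₀(p) — preserves the Krein sesquilinear form: (U_{a,Λ}φ, U_{a,Λ}ψ) = (φ,ψ) for all φ, ψ ∈ L²(ℝ³, μ₀; ℂ⁴). -/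
open MeasureTheory

noncomputable section

/-- The Krein sesquilinear form on `L²(ℝ³, μ₀; ℂ⁴)`:
`(φ,ψ) = ∫ (∑_{i=1}^3 conj(φᵢ)ψᵢ − conj(φ₀)ψ₀) dμ₀`. -/
def krein (φ ψ : (Fin 3 → ℝ) → Fin 4 → ℂ) : ℂ :=
  ∫ p, ((∑ i : Fin 3, (starRingEnd ℂ) (φ p i.succ) * ψ p i.succ)
      - (starRingEnd ℂ) (φ p 0) * ψ p 0) ∂(muM 0)

/-- The vector representation operator
`(U_{a,Λ}φ)(p) = exp(i a·τ₀(p)) Λ·φ(spatial part of Λ⁻¹·τ₀(p))` on `L²(ℝ³, μ₀; ℂ⁴)`. -/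
def Uvec (a : Fin 4 → ℝ) (Λ : Matrix (Fin 4) (Fin 4) ℝ)
    (φ : (Fin 3 → ℝ) → Fin 4 → ℂ) : (Fin 3 → ℝ) → Fin 4 → ℂ :=
  fun p => Complex.exp (Complex.I * (mink a (tauM 0 p) : ℂ)) •
    (Λ.map (fun x : ℝ => (x : ℂ))).mulVec
      (φ (fun i : Fin 3 => (Λ⁻¹).mulVec (tauM 0 p) i.succ))

namespace UPK
open Matrix
open scoped NNReal ENNReal

lemma succ_two : (Fin.succ 2 : Fin 4) = 3 := rfl
lemma succ_one : (Fin.succ 1 : Fin 4) = 2 := rfl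
lemma succ_zero : (Fin.succ 0 : Fin 4) = 1 := rfl

lemma mink_eq_dot (x y : Fin 4 → ℝ) : mink x y = x ⬝ᵥ (eta *ᵥ y) := by
  simp [mink, eta, dotProduct, mulVec_diagonal, Fin.sum_univ_four]; ring

lemma eta_sq : eta * eta = 1 := by
  ext i j
  simp [eta, Matrix.diagonal_mul_diagonal]
  fin_cases i <;> fin_cases j <;> simp [Matrix.diagonal, Matrix.one_apply]

lemma det_sq (M : Matrix (Fin 4) (Fin 4) ℝ) (hM : Mᵀ * eta * M = eta) :
    (M.det)^2 = 1 := by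
  have h := congrArg Matrix.det hM
  simp [Matrix.det_mul, eta, Fin.prod_univ_four] at h
  nlinarith [h]

lemma isUnit_det (M : Matrix (Fin 4) (Fin 4) ℝ) (hM : Mᵀ * eta * M = eta) :
    IsUnit M.det := by
  have := det_sq M hM
  exact isUnit_iff_ne_zero.2 (by intro h; rw [h] at this; norm_num at this)

lemma inv_eq (M : Matrix (Fin 4) (Fin 4) ℝ) (hM : Mᵀ * eta * M = eta) :
    M⁻¹ = eta * Mᵀ * eta := by
  apply Matrix.inv_eq_left_inv
  rw [Matrix.mul_assoc, Matrix.mul_assoc, ← Matrix.mul_assoc Mᵀ, hM, eta_sq]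

lemma lor' (M : Matrix (Fin 4) (Fin 4) ℝ) (hM : Mᵀ * eta * M = eta) :
    M * eta * Mᵀ = eta := by
  have h1 : M * M⁻¹ = 1 := Matrix.mul_nonsing_inv M (isUnit_det M hM)
  rw [inv_eq M hM] at h1
  calc M * eta * Mᵀ = (M * (eta * Mᵀ * eta)) * eta := by
        simp only [Matrix.mul_assoc, eta_sq, Matrix.mul_one]
    _ = eta := by rw [h1, Matrix.one_mul]

lemma inv_lor (M : Matrix (Fin 4) (Fin 4) ℝ) (hM : Mᵀ * eta * M = eta) :
    (M⁻¹)ᵀ * eta * M⁻¹ = eta := by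
  rw [inv_eq M hM]
  simp only [Matrix.transpose_mul, Matrix.transpose_transpose]
  have he : etaᵀ = eta := by simp [eta, Matrix.diagonal_transpose]
  rw [he]
  calc eta * (M * eta) * eta * (eta * Mᵀ * eta)
      = eta * (M * eta * Mᵀ) * eta := by
        simp only [Matrix.mul_assoc, eta_sq, Matrix.mul_one, Matrix.one_mul]
    _ = eta := by
        rw [lor' M hM]
        simp only [← Matrix.mul_assoc, eta_sq, Matrix.one_mul]

lemma inv_00 (M : Matrix (Fin 4) (Fin 4) ℝ) (hM : Mᵀ * eta * M = eta) :
    M⁻¹ 0 0 = M 0 0 := by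
  rw [inv_eq M hM]
  simp [eta, Matrix.mul_apply, Fin.sum_univ_four, Matrix.diagonal]

lemma mink_invariant (M : Matrix (Fin 4) (Fin 4) ℝ) (hM : Mᵀ * eta * M = eta)
    (x y : Fin 4 → ℝ) : mink (M *ᵥ x) (M *ᵥ y) = mink x y := by
  rw [mink_eq_dot, mink_eq_dot, Matrix.mulVec_mulVec, Matrix.dotProduct_mulVec,
    ← Matrix.vecMul_transpose M x, Matrix.vecMul_vecMul, ← Matrix.mul_assoc, hM,
    Matrix.dotProduct_mulVec]

section entries
variable (M : Matrix (Fin 4) (Fin 4) ℝ)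

def Sp : Matrix (Fin 3) (Fin 3) ℝ := Matrix.of fun i j => M i.succ j.succ
def av : Fin 3 → ℝ := fun j => M 0 j.succ
def bv : Fin 3 → ℝ := fun i => M i.succ 0

lemma rel_gamma (hM' : M * eta * Mᵀ = eta) : M 0 0 ^ 2 = 1 + (av M) ⬝ᵥ (av M) := by
  have h := congrFun (congrFun hM' 0) 0
  simp [Matrix.mul_apply, eta, Fin.sum_univ_four, dotProduct, Fin.sum_univ_three,
    Matrix.diagonal, Matrix.transpose_apply] at h
  simp [av, dotProduct, Fin.sum_univ_three, succ_two, succ_one, succ_zero]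
  nlinarith [h]

lemma rel_Sa (hM' : M * eta * Mᵀ = eta) : (Sp M) *ᵥ (av M) = M 0 0 • (bv M) := by
  funext i
  have h := congrFun (congrFun hM' i.succ) 0
  simp [Matrix.mul_apply, eta, Fin.sum_univ_four, Matrix.diagonal,
    Matrix.transpose_apply, Fin.succ_ne_zero] at h
  simp [Sp, av, bv, Matrix.mulVec, dotProduct, Fin.sum_univ_three, succ_two, succ_one, succ_zero]
  linarith [h]

lemma rel_StS (hM : Mᵀ * eta * M = eta) :
    (Sp M)ᵀ * (Sp M) = 1 + Matrix.replicateCol (Fin 1) (av M) * Matrix.replicateRow (Fin 1) (av M) := by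
  ext i j
  have h := congrFun (congrFun hM i.succ) j.succ
  simp [Matrix.mul_apply, eta, Fin.sum_univ_four, Matrix.diagonal,
    Matrix.transpose_apply, Fin.succ_ne_zero] at h
  by_cases hij : i = j
  · subst hij
    simp [Matrix.mul_apply, Sp, av, Matrix.one_apply, Fin.sum_univ_three,
      Matrix.replicateCol, Matrix.replicateRow, Matrix.add_apply, succ_two, succ_one, succ_zero] at h ⊢
    have hv : (![(-1:ℝ),-1,-1]) i = -1 := by fin_cases i <;> rfl
    rw [hv] at h
    linarith [h]
  · have : (i.succ = j.succ) ↔ False := by simp [Fin.succ_inj, hij]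
    simp [this, hij] at h
    simp [Matrix.mul_apply, Sp, av, Matrix.one_apply, Fin.sum_univ_three,
      Matrix.replicateCol, Matrix.replicateRow, Matrix.add_apply, hij, succ_two, succ_one, succ_zero] at h ⊢
    linarith [h]

lemma det_Sp_sq (hM : Mᵀ * eta * M = eta) (hM' : M * eta * Mᵀ = eta) :
    (Sp M).det ^ 2 = M 0 0 ^ 2 := by
  have h := congrArg Matrix.det (rel_StS M hM)
  rw [Matrix.det_mul, Matrix.det_transpose] at h
  erw [Matrix.det_one_add_replicateCol_mul_replicateRow] at h
  rw [rel_gamma M hM']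
  nlinarith [h]

lemma isUnit_det_Sp (hM : Mᵀ * eta * M = eta) (hM' : M * eta * Mᵀ = eta)
    (h0 : 0 < M 0 0) : IsUnit (Sp M).det := by
  have h := det_Sp_sq M hM hM'
  refine isUnit_iff_ne_zero.2 ?_
  intro hz
  rw [hz] at h
  nlinarith [h]

end entries

section geom
variable (M : Matrix (Fin 4) (Fin 4) ℝ)

/-- The spatial map induced by `M` on the light cone. -/
def Fm (p : Fin 3 → ℝ) : Fin 3 → ℝ := fun i => (M *ᵥ tauM 0 p) i.succ

lemma omega_nonneg (p : Fin 3 → ℝ) : 0 ≤ omegaM 0 p := Real.sqrt_nonneg _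

lemma omega_sq (p : Fin 3 → ℝ) : (omegaM 0 p) ^ 2 = ∑ i, p i ^ 2 := by
  rw [omegaM, Real.sq_sqrt]
  · norm_num
  · positivity

lemma omega_pos {p : Fin 3 → ℝ} (hp : p ≠ 0) : 0 < omegaM 0 p := by
  rcases Function.ne_iff.1 hp with ⟨i, hi⟩
  apply Real.sqrt_pos.2
  have h1 : 0 < p i ^ 2 := pow_two_pos_of_ne_zero hi
  have h2 : p i ^ 2 ≤ ∑ j, p j ^ 2 :=
    Finset.single_le_sum (f := fun j => p j ^ 2) (fun j _ => by positivity) (Finset.mem_univ i)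
  norm_num
  linarith

lemma tau_zero (p : Fin 3 → ℝ) : tauM 0 p 0 = omegaM 0 p := rfl

lemma tau_succ (p : Fin 3 → ℝ) (i : Fin 3) : tauM 0 p i.succ = p i := by
  fin_cases i <;> rfl

lemma mink_tau (p : Fin 3 → ℝ) : mink (tauM 0 p) (tauM 0 p) = 0 := by
  have h := omega_sq p
  simp [mink, tauM, Fin.sum_univ_three] at h ⊢
  nlinarith [h]

lemma mulVec_tau_zero (p : Fin 3 → ℝ) :
    (M *ᵥ tauM 0 p) 0 = M 0 0 * omegaM 0 p + (av M) ⬝ᵥ p := by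
  simp [Matrix.mulVec, dotProduct, Fin.sum_univ_four, Fin.sum_univ_three, tauM, av,
    succ_two, succ_one, succ_zero]
  ring

lemma Fm_apply (p : Fin 3 → ℝ) (i : Fin 3) :
    Fm M p i = bv M i * omegaM 0 p + ((Sp M) *ᵥ p) i := by
  simp [Fm, Matrix.mulVec, dotProduct, Fin.sum_univ_four, Fin.sum_univ_three, tauM,
    bv, Sp, succ_two, succ_one, succ_zero]
  ring

lemma mulVec_tau_zero_pos (hM : Mᵀ * eta * M = eta) (h0 : 0 < M 0 0)
    {p : Fin 3 → ℝ} (hp : p ≠ 0) : 0 < (M *ᵥ tauM 0 p) 0 := by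
  have hM' := lor' M hM
  have hg := rel_gamma M hM'
  have hw : 0 < omegaM 0 p := omega_pos hp
  have hw2 := omega_sq p
  have hCS := Finset.sum_mul_sq_le_sq_mul_sq Finset.univ (av M) p
  rw [mulVec_tau_zero]
  simp only [dotProduct] at hg ⊢
  have e1 : ∑ i, av M i * av M i = ∑ i, av M i ^ 2 := by
    apply Finset.sum_congr rfl; intro i _; ring
  rw [e1] at hg
  by_contra hcon
  push_neg at hcon
  have hgw : 0 < M 0 0 * omegaM 0 p := mul_pos h0 hw
  have h1 : 0 ≤ -(M 0 0 * omegaM 0 p + ∑ i, av M i * p i) := by linarith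
  have h2 : 0 ≤ M 0 0 * omegaM 0 p - ∑ i, av M i * p i := by linarith
  have h3 := mul_nonneg h1 h2
  have h4 : M 0 0 ^ 2 * omegaM 0 p ^ 2
      = omegaM 0 p ^ 2 + (∑ i, av M i ^ 2) * omegaM 0 p ^ 2 := by rw [hg]; ring
  have h5 : (∑ i, av M i ^ 2) * ∑ i, p i ^ 2 = (∑ i, av M i ^ 2) * omegaM 0 p ^ 2 := by
    rw [hw2]
  have hw2pos : 0 < omegaM 0 p ^ 2 := by positivity
  nlinarith [h3, h4, h5, hCS, hw2pos]

lemma sum_Fm_sq (hM : Mᵀ * eta * M = eta) (p : Fin 3 → ℝ) :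
    ∑ i, (Fm M p i) ^ 2 = ((M *ᵥ tauM 0 p) 0) ^ 2 := by
  have h := mink_invariant M hM (tauM 0 p) (tauM 0 p)
  rw [mink_tau] at h
  simp [mink] at h
  simp [Fm, Fin.sum_univ_three, succ_two, succ_one, succ_zero]
  nlinarith [h]

lemma omega_Fm (hM : Mᵀ * eta * M = eta) (h0 : 0 < M 0 0)
    {p : Fin 3 → ℝ} (hp : p ≠ 0) : omegaM 0 (Fm M p) = (M *ᵥ tauM 0 p) 0 := by
  rw [omegaM]
  norm_num
  rw [sum_Fm_sq M hM p]
  exact Real.sqrt_sq (mulVec_tau_zero_pos M hM h0 hp).le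

lemma Fm_ne_zero (hM : Mᵀ * eta * M = eta) (h0 : 0 < M 0 0)
    {p : Fin 3 → ℝ} (hp : p ≠ 0) : Fm M p ≠ 0 := by
  intro h
  have h1 := sum_Fm_sq M hM p
  rw [h] at h1
  simp at h1
  have := mulVec_tau_zero_pos M hM h0 hp
  nlinarith [h1, this]

lemma tau_Fm (hM : Mᵀ * eta * M = eta) (h0 : 0 < M 0 0)
    {p : Fin 3 → ℝ} (hp : p ≠ 0) : tauM 0 (Fm M p) = M *ᵥ tauM 0 p := by
  funext j
  rcases Fin.eq_zero_or_eq_succ j with hj | ⟨i, hj⟩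
  · rw [hj, tau_zero, omega_Fm M hM h0 hp]
  · rw [hj, tau_succ]
    rfl

lemma Fm_comp (M N : Matrix (Fin 4) (Fin 4) ℝ) (hM : Mᵀ * eta * M = eta) (h0 : 0 < M 0 0)
    (hNM : N * M = 1) {p : Fin 3 → ℝ} (hp : p ≠ 0) : Fm N (Fm M p) = p := by
  funext i
  rw [Fm, tau_Fm M hM h0 hp, Matrix.mulVec_mulVec, hNM, Matrix.one_mulVec, tau_succ]


/-- Matrix determinant lemma specialisation. -/
lemma det_helper (S : Matrix (Fin 3) (Fin 3) ℝ) (b n : Fin 3 → ℝ) (hS : IsUnit S.det) :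
    (S + Matrix.replicateCol (Fin 1) b * Matrix.replicateRow (Fin 1) n).det
      = S.det * (1 + n ⬝ᵥ (S⁻¹ *ᵥ b)) := by
  have h1 : S + Matrix.replicateCol (Fin 1) b * Matrix.replicateRow (Fin 1) n
      = S * (1 + Matrix.replicateCol (Fin 1) (S⁻¹ *ᵥ b) * Matrix.replicateRow (Fin 1) n) := by
    rw [Matrix.mul_add, Matrix.mul_one, ← Matrix.mul_assoc, ← Matrix.replicateCol_mulVec,
      Matrix.mulVec_mulVec, Matrix.mul_nonsing_inv _ hS, Matrix.one_mulVec]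
  rw [h1, Matrix.det_mul]
  erw [Matrix.det_one_add_replicateCol_mul_replicateRow]

/-- The Jacobian matrix of `Fm M` at `p`. -/
def Jm (p : Fin 3 → ℝ) : Matrix (Fin 3) (Fin 3) ℝ :=
  Matrix.of fun i j => Sp M i j + bv M i * (p j / omegaM 0 p)

lemma Jm_eq_add (p : Fin 3 → ℝ) : Jm M p
    = Sp M + Matrix.replicateCol (Fin 1) (bv M) * Matrix.replicateRow (Fin 1) (fun j => p j / omegaM 0 p) := by
  ext i j
  simp [Jm, Matrix.mul_apply, Matrix.replicateCol, Matrix.replicateRow]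

lemma Sp_inv_bv (hM : Mᵀ * eta * M = eta) (hM' : M * eta * Mᵀ = eta) (h0 : 0 < M 0 0) :
    (Sp M)⁻¹ *ᵥ bv M = (M 0 0)⁻¹ • av M := by
  have hS := isUnit_det_Sp M hM hM' h0
  have h1 : bv M = Sp M *ᵥ ((M 0 0)⁻¹ • av M) := by
    rw [Matrix.mulVec_smul, rel_Sa M hM', smul_smul, inv_mul_cancel₀ h0.ne', one_smul]
  rw [h1, Matrix.mulVec_mulVec, Matrix.nonsing_inv_mul _ hS, Matrix.one_mulVec]

lemma mulVec_tau_zero' (h0 : 0 < M 0 0) {p : Fin 3 → ℝ} (hp : p ≠ 0) :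
    (M *ᵥ tauM 0 p) 0
      = omegaM 0 p * (M 0 0 + (fun j => p j / omegaM 0 p) ⬝ᵥ av M) := by
  have hw : 0 < omegaM 0 p := omega_pos hp
  rw [mulVec_tau_zero, mul_add]
  congr 1
  · ring
  · simp only [dotProduct]
    rw [Finset.mul_sum]
    apply Finset.sum_congr rfl
    intro j _
    field_simp

lemma abs_det_Jm (hM : Mᵀ * eta * M = eta) (hM' : M * eta * Mᵀ = eta) (h0 : 0 < M 0 0)
    {p : Fin 3 → ℝ} (hp : p ≠ 0) :
    |(Jm M p).det| = (M *ᵥ tauM 0 p) 0 / omegaM 0 p := by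
  have hw : 0 < omegaM 0 p := omega_pos hp
  have hS := isUnit_det_Sp M hM hM' h0
  have hdet : (Jm M p).det
      = (Sp M).det * (1 + (M 0 0)⁻¹ * ((fun j => p j / omegaM 0 p) ⬝ᵥ av M)) := by
    rw [Jm_eq_add, det_helper _ _ _ hS, Sp_inv_bv M hM hM' h0, dotProduct_smul,
      smul_eq_mul]
  have habsS : |(Sp M).det| = M 0 0 := by
    have h := det_Sp_sq M hM hM'
    have : ((Sp M).det - M 0 0) * ((Sp M).det + M 0 0) = 0 := by nlinarith [h]
    rcases mul_eq_zero.1 this with h1 | h1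
    · rw [sub_eq_zero.1 h1]; exact abs_of_pos h0
    · have : (Sp M).det = -(M 0 0) := by linarith
      rw [this, abs_neg]; exact abs_of_pos h0
  have hX : 0 < M 0 0 + (fun j => p j / omegaM 0 p) ⬝ᵥ av M := by
    have hpos := mulVec_tau_zero_pos M hM h0 hp
    rw [mulVec_tau_zero' M h0 hp] at hpos
    rcases mul_pos_iff.1 hpos with ⟨_, h⟩ | ⟨h, _⟩
    · exact h
    · linarith
  rw [hdet, abs_mul, habsS, mulVec_tau_zero' M h0 hp]
  have h1 : 0 < 1 + (M 0 0)⁻¹ * ((fun j => p j / omegaM 0 p) ⬝ᵥ av M) := by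
    nlinarith [mul_pos (inv_pos.2 h0) hX, inv_mul_cancel₀ h0.ne']
  rw [abs_of_pos h1]
  field_simp


lemma hasFDerivAt_Fm (M : Matrix (Fin 4) (Fin 4) ℝ) {p : Fin 3 → ℝ} (hp : p ≠ 0) :
    HasFDerivAt (Fm M)
      (LinearMap.toContinuousLinearMap (Matrix.toLin' (Jm M p))) p := by
  have hw : 0 < omegaM 0 p := omega_pos hp
  apply hasFDerivAt_pi''
  intro i
  have hfun : (fun q => Fm M q i) = fun q => bv M i * omegaM 0 q + (Sp M *ᵥ q) i := by
    funext q; exact Fm_apply M q i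
  rw [hfun]
  -- derivative of the quadratic form
  have hsq : HasFDerivAt (fun q : Fin 3 → ℝ => (∑ k, q k ^ 2) + 0 ^ 2)
      (∑ k : Fin 3, (p k • ContinuousLinearMap.proj (R := ℝ) (φ := fun _ : Fin 3 => ℝ) k
        + p k • ContinuousLinearMap.proj k)) p := by
    apply HasFDerivAt.add_const
    have : (fun q : Fin 3 → ℝ => ∑ k, q k ^ 2) = fun q => ∑ k, q k * q k := by
      funext q; apply Finset.sum_congr rfl; intro k _; ring
    rw [this]
    exact HasFDerivAt.fun_sum fun k _ =>
      (hasFDerivAt_apply k p).mul (hasFDerivAt_apply k p)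
  have hx : (∑ k, p k ^ 2) + 0 ^ 2 ≠ 0 := by
    have := omega_pos hp
    rw [omegaM] at this
    intro h
    rw [h] at this
    simp at this
  have homega : HasFDerivAt (omegaM 0)
      ((1 / (2 * Real.sqrt ((∑ k, p k ^ 2) + 0 ^ 2))) •
        (∑ k : Fin 3, (p k • ContinuousLinearMap.proj (R := ℝ) (φ := fun _ : Fin 3 => ℝ) k
          + p k • ContinuousLinearMap.proj k))) p :=
    hsq.sqrt hx
  have hlin : HasFDerivAt (fun q : Fin 3 → ℝ => (Sp M *ᵥ q) i)
      ((ContinuousLinearMap.proj i).comp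
        (LinearMap.toContinuousLinearMap (Matrix.toLin' (Sp M)))) p := by
    have h := ((ContinuousLinearMap.proj (R := ℝ) (φ := fun _ : Fin 3 => ℝ) i).comp
      (LinearMap.toContinuousLinearMap (Matrix.toLin' (Sp M)))).hasFDerivAt (x := p)
    convert h using 2
    rfl
  have hcomb := (homega.const_mul (bv M i)).add hlin
  convert hcomb using 1
  · rfl
  ext v
  have hws : Real.sqrt ((∑ k, p k ^ 2) + 0 ^ 2) = omegaM 0 p := rfl
  simp [Matrix.toLin'_apply, Matrix.mulVec, dotProduct, Jm, hws,
    Finset.mul_sum, ContinuousLinearMap.proj]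
  rw [← Finset.sum_add_distrib]
  apply Finset.sum_congr rfl
  intro j _
  rw [show Real.sqrt (∑ x : Fin 3, p x ^ 2) = omegaM 0 p from by rw [omegaM]; norm_num]
  field_simp
  ring


lemma continuous_omega : Continuous (omegaM 0) := by
  apply Continuous.sqrt
  exact (continuous_finset_sum _ fun i _ => (continuous_apply i).pow 2).add continuous_const

lemma meas_dens : Measurable fun p : Fin 3 → ℝ => Real.toNNReal (1 / (2 * omegaM 0 p)) :=
  measurable_real_toNNReal.comp
    (measurable_const.div (measurable_const.mul continuous_omega.measurable))

lemma mem_s {p : Fin 3 → ℝ} : p ∈ ({(0 : Fin 3 → ℝ)}ᶜ : Set (Fin 3 → ℝ)) ↔ p ≠ 0 :=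
  Set.mem_compl_singleton_iff

/-- Lorentz invariance of the measure `μ₀`, at the level of integrals of arbitrary functions. -/
lemma integral_comp_Fm (M : Matrix (Fin 4) (Fin 4) ℝ) (hM : Mᵀ * eta * M = eta)
    (h0 : 0 < M 0 0) (G : (Fin 3 → ℝ) → ℂ) :
    ∫ p, G (Fm M p) ∂(muM 0) = ∫ q, G q ∂(muM 0) := by
  classical
  have hM' := lor' M hM
  have hMdet := isUnit_det M hM
  have hMinv_lor := inv_lor M hM
  have hMinv_00 : 0 < M⁻¹ 0 0 := by rw [inv_00 M hM]; exact h0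
  have hNM : M⁻¹ * M = 1 := Matrix.nonsing_inv_mul M hMdet
  have hMN : M * M⁻¹ = 1 := Matrix.mul_nonsing_inv M hMdet
  set s : Set (Fin 3 → ℝ) := {(0 : Fin 3 → ℝ)}ᶜ with hs_def
  have hs : MeasurableSet s := (measurableSet_singleton _).compl
  -- unfold withDensity
  have hden : (fun p : Fin 3 → ℝ => ENNReal.ofReal (1 / (2 * omegaM 0 p)))
      = fun p : Fin 3 → ℝ => ((Real.toNNReal (1 / (2 * omegaM 0 p)) : ℝ≥0) : ℝ≥0∞) := rfl
  rw [muM, hden, integral_withDensity_eq_integral_smul meas_dens,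
    integral_withDensity_eq_integral_smul meas_dens]
  have hsmul : ∀ (q : Fin 3 → ℝ) (z : ℂ),
      (Real.toNNReal (1 / (2 * omegaM 0 q))) • z = (1 / (2 * omegaM 0 q)) • z := by
    intro q z
    rw [NNReal.smul_def, Real.coe_toNNReal]
    exact div_nonneg zero_le_one (by linarith [omega_nonneg q])
  simp only [hsmul]
  -- restrict to the complement of the origin
  have hres : (volume : Measure (Fin 3 → ℝ)).restrict s = volume := by
    apply Measure.restrict_eq_self_of_ae_mem
    have h1 : {x : Fin 3 → ℝ | ¬ x ∈ s} = {0} := by ext x; simp [hs_def]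
    rw [ae_iff, h1]
    exact measure_singleton 0
  rw [← hres]
  have hinj : Set.InjOn (Fm M) s := by
    intro p hp q hq h
    have h1 := Fm_comp M M⁻¹ hM h0 hNM (mem_s.1 hp)
    have h2 := Fm_comp M M⁻¹ hM h0 hNM (mem_s.1 hq)
    rw [← h1, ← h2, h]
  have himage : Fm M '' s = s := by
    apply Set.eq_of_subset_of_subset
    · rintro q ⟨p, hp, rfl⟩
      exact mem_s.2 (Fm_ne_zero M hM h0 (mem_s.1 hp))
    · intro q hq
      refine ⟨Fm M⁻¹ q, mem_s.2 (Fm_ne_zero M⁻¹ hMinv_lor hMinv_00 (mem_s.1 hq)), ?_⟩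
      exact Fm_comp M⁻¹ M hMinv_lor hMinv_00 hMN (mem_s.1 hq)
  have hf' : ∀ x ∈ s, HasFDerivWithinAt (Fm M)
      ((fun x => LinearMap.toContinuousLinearMap (Matrix.toLin' (Jm M x))) x) s x :=
    fun x hx => (hasFDerivAt_Fm M (mem_s.1 hx)).hasFDerivWithinAt
  have hCoV := integral_image_eq_integral_abs_det_fderiv_smul volume hs hf' hinj
    (fun q => (1 / (2 * omegaM 0 q)) • G q)
  rw [himage] at hCoV
  rw [hCoV]
  apply setIntegral_congr_fun hs
  intro x hx
  have hx0 : x ≠ 0 := mem_s.1 hx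
  have hw : 0 < omegaM 0 x := omega_pos hx0
  have hpos := mulVec_tau_zero_pos M hM h0 hx0
  have hdet : |(LinearMap.toContinuousLinearMap (Matrix.toLin' (Jm M x))).det|
      = (M *ᵥ tauM 0 x) 0 / omegaM 0 x := by
    have h1 : (LinearMap.toContinuousLinearMap (Matrix.toLin' (Jm M x))).det
        = (Jm M x).det := by
      simp [ContinuousLinearMap.det, LinearMap.det_toLin']
    rw [h1, abs_det_Jm M hM hM' h0 hx0]
  simp only [hdet, omega_Fm M hM h0 hx0, smul_smul]
  congr 1
  field_simp

end geom

section form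

def etaC : Matrix (Fin 4) (Fin 4) ℂ := eta.map Complex.ofRealHom

lemma form_eq_dot (w z : Fin 4 → ℂ) :
    (∑ i : Fin 3, (starRingEnd ℂ) (w i.succ) * z i.succ) - (starRingEnd ℂ) (w 0) * z 0
      = -(star w ⬝ᵥ (etaC *ᵥ z)) := by
  simp [etaC, eta, dotProduct, Matrix.mulVec, Fin.sum_univ_four, Fin.sum_univ_three,
    Matrix.diagonal, Matrix.map_apply, Pi.star_apply, Complex.star_def,
    succ_two, succ_one, succ_zero]
  ring

lemma star_mulVec_real (Λ : Matrix (Fin 4) (Fin 4) ℝ) (u : Fin 4 → ℂ) :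
    star ((Λ.map (fun x : ℝ => (x : ℂ))) *ᵥ u)
      = (Λ.map (fun x : ℝ => (x : ℂ))) *ᵥ (star u) := by
  funext j
  simp only [Pi.star_apply, Matrix.mulVec, dotProduct, Complex.star_def, map_sum, _root_.map_mul,
    Matrix.map_apply, Complex.conj_ofReal]

lemma CtEC (Λ : Matrix (Fin 4) (Fin 4) ℝ) (hLor : Λᵀ * eta * Λ = eta) :
    (Λ.map (fun x : ℝ => (x : ℂ)))ᵀ * etaC * (Λ.map (fun x : ℝ => (x : ℂ))) = etaC := by
  have hc : (fun x : ℝ => (x : ℂ)) = ⇑Complex.ofRealHom := rfl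
  rw [hc, etaC, ← Matrix.transpose_map, ← Matrix.map_mul, ← Matrix.map_mul, hLor]

lemma form_invariant (Λ : Matrix (Fin 4) (Fin 4) ℝ) (hLor : Λᵀ * eta * Λ = eta)
    (u v : Fin 4 → ℂ) :
    (∑ i : Fin 3, (starRingEnd ℂ) (((Λ.map (fun x : ℝ => (x : ℂ))) *ᵥ u) i.succ)
        * ((Λ.map (fun x : ℝ => (x : ℂ))) *ᵥ v) i.succ)
      - (starRingEnd ℂ) (((Λ.map (fun x : ℝ => (x : ℂ))) *ᵥ u) 0)
        * ((Λ.map (fun x : ℝ => (x : ℂ))) *ᵥ v) 0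
    = (∑ i : Fin 3, (starRingEnd ℂ) (u i.succ) * v i.succ)
      - (starRingEnd ℂ) (u 0) * v 0 := by
  rw [form_eq_dot, form_eq_dot]
  congr 1
  rw [star_mulVec_real, Matrix.mulVec_mulVec, Matrix.dotProduct_mulVec,
    ← Matrix.vecMul_transpose (Λ.map (fun x : ℝ => (x : ℂ))) (star u),
    Matrix.vecMul_vecMul, ← Matrix.mul_assoc, CtEC Λ hLor, Matrix.dotProduct_mulVec]

lemma conj_exp_mul (r : ℝ) :
    (starRingEnd ℂ) (Complex.exp (Complex.I * r)) * Complex.exp (Complex.I * r) = 1 := by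
  rw [← Complex.exp_conj, ← Complex.exp_add]
  have h : (starRingEnd ℂ) (Complex.I * r) + Complex.I * r = 0 := by
    rw [_root_.map_mul, Complex.conj_I, Complex.conj_ofReal]
    ring
  rw [h, Complex.exp_zero]

end form
end UPK

/-- The operator `U_{a,Λ}` preserves the Krein sesquilinear form on `L²(ℝ³, μ₀; ℂ⁴)` for
every `a ∈ ℝ⁴` and every orthochronous Lorentz transformation `Λ`. -/
theorem Uvec_preserves_krein
    (a : Fin 4 → ℝ) (Λ : Matrix (Fin 4) (Fin 4) ℝ)
    (hLor : Λ.transpose * eta * Λ = eta) (hOrth : 0 < Λ 0 0)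
    (φ ψ : (Fin 3 → ℝ) → Fin 4 → ℂ)
    (hφ : ∀ μidx : Fin 4, MemLp (fun p => φ p μidx) 2 (muM 0))
    (hψ : ∀ μidx : Fin 4, MemLp (fun p => ψ p μidx) 2 (muM 0)) :
    krein (Uvec a Λ φ) (Uvec a Λ ψ) = krein φ ψ := by
  have hinvLor := UPK.inv_lor Λ hLor
  have hinv00 : 0 < Λ⁻¹ 0 0 := by rw [UPK.inv_00 Λ hLor]; exact hOrth
  rw [krein, krein]
  have hpt : ∀ p : Fin 3 → ℝ,
      ((∑ i : Fin 3, (starRingEnd ℂ) (Uvec a Λ φ p i.succ) * Uvec a Λ ψ p i.succ)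
        - (starRingEnd ℂ) (Uvec a Λ φ p 0) * Uvec a Λ ψ p 0)
      = ((∑ i : Fin 3, (starRingEnd ℂ) (φ (UPK.Fm Λ⁻¹ p) i.succ) * ψ (UPK.Fm Λ⁻¹ p) i.succ)
        - (starRingEnd ℂ) (φ (UPK.Fm Λ⁻¹ p) 0) * ψ (UPK.Fm Λ⁻¹ p) 0) := by
    intro p
    have hc := UPK.conj_exp_mul (mink a (tauM 0 p))
    have h1 : ∀ x y : ℂ,
        (starRingEnd ℂ) (Complex.exp (Complex.I * (mink a (tauM 0 p) : ℂ)) * x)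
          * (Complex.exp (Complex.I * (mink a (tauM 0 p) : ℂ)) * y)
        = (starRingEnd ℂ) x * y := by
      intro x y
      rw [_root_.map_mul]
      calc (starRingEnd ℂ) (Complex.exp (Complex.I * (mink a (tauM 0 p) : ℂ)))
            * (starRingEnd ℂ) x * (Complex.exp (Complex.I * (mink a (tauM 0 p) : ℂ)) * y)
          = ((starRingEnd ℂ) (Complex.exp (Complex.I * (mink a (tauM 0 p) : ℂ)))
              * Complex.exp (Complex.I * (mink a (tauM 0 p) : ℂ)))
            * ((starRingEnd ℂ) x * y) := by ring
        _ = (starRingEnd ℂ) x * y := by rw [hc, one_mul]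
    simp only [Uvec, Pi.smul_apply, smul_eq_mul, h1]
    exact UPK.form_invariant Λ hLor _ _
  simp only [hpt]
  exact UPK.integral_comp_Fm Λ⁻¹ hinvLor hinv00
    (fun q => (∑ i : Fin 3, (starRingEnd ℂ) (φ q i.succ) * ψ q i.succ)
      - (starRingEnd ℂ) (φ q 0) * ψ q 0)
end
end

section
/- (The anti-chronological series is the inverse of the S-matrix series.) Let A be an associative unital ℂ-algebra and T : ℕ → A a family of elements (only T_n for n ≥ 1 is used). Define the formal power series S := 1 + ∑_{n≥1} (iⁿ/n!)·T_n·Xⁿ in PowerSeries A. For n ≥ 1 define the anti-chronological coefficients T̄_n := (−1)ⁿ · ∑_{r=1}^{n} (−1)^r ∑_{(n₁,…,n_r)} (n!/(n₁!⋯n_r!)) · T_{n₁}·T_{n₂}·⋯·T_{n_r}, where the inner sum runs over all ordered tuples of positive integers with n₁+⋯+n_r = n, and set S̄ := 1 + ∑_{n≥1} ((−i)ⁿ/n!)·T̄_n·Xⁿ. Then S̄ * S = 1 and S * S̄ = 1 in PowerSeries A. -/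
noncomputable section

/-- The S-matrix formal power series `S = 1 + ∑_{n≥1} (iⁿ/n!) Tₙ Xⁿ`. -/
def chronoSeries {A : Type*} [Ring A] [Algebra ℂ A] (T : ℕ → A) : PowerSeries A :=
  PowerSeries.mk fun n =>
    if n = 0 then 1 else ((Complex.I ^ n / (n.factorial : ℂ))) • T n

/-- The anti-chronological coefficients
`T̄ₙ = (−1)ⁿ ∑_{r=1}^n (−1)^r ∑_{n₁+⋯+n_r=n, nᵢ≥1} (n!/(n₁!⋯n_r!)) T_{n₁}⋯T_{n_r}`,
the inner sum being over ordered tuples (compositions of `n`). -/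
def antiChrono {A : Type*} [Ring A] [Algebra ℂ A] (T : ℕ → A) (n : ℕ) : A :=
  ((-1 : ℂ) ^ n) • ∑ c : Composition n,
    ((-1 : ℂ) ^ c.length) •
      ((((n.factorial : ℂ) / ((c.blocks.map Nat.factorial).prod : ℕ))) •
        (c.blocks.map T).prod)

/-- The anti-chronological series `S̄ = 1 + ∑_{n≥1} ((−i)ⁿ/n!) T̄ₙ Xⁿ`. -/
def antiChronoSeries {A : Type*} [Ring A] [Algebra ℂ A] (T : ℕ → A) : PowerSeries A :=
  PowerSeries.mk fun n =>
    if n = 0 then 1 else (((-Complex.I) ^ n / (n.factorial : ℂ))) • antiChrono T n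

namespace AC
open Finset

variable {A : Type*} [Ring A] [Algebra ℂ A] (T : ℕ → A)

def w (l : List ℕ) : A :=
  ((-1 : ℂ) ^ l.length / ((l.map Nat.factorial).prod : ℕ)) • (l.map T).prod

def cc (n : ℕ) : A := ∑ c : Composition n, w T c.blocks

lemma w_nil : w T [] = 1 := by simp [w]

lemma w_cons (m : ℕ) (l : List ℕ) :
    w T (m :: l) = -(((m.factorial : ℂ))⁻¹ • (T m * w T l)) := by
  simp only [w, List.map_cons, List.prod_cons, List.length_cons, mul_smul_comm, smul_smul,
    ← neg_smul]
  congr 1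
  push_cast
  field_simp
  ring

lemma w_concat (m : ℕ) (l : List ℕ) :
    w T (l ++ [m]) = -(((m.factorial : ℂ))⁻¹ • (w T l * T m)) := by
  simp only [w, List.map_append, List.prod_append, List.map_cons, List.map_nil,
    List.prod_cons, List.prod_nil, List.length_append, List.length_cons, List.length_nil,
    mul_one, smul_mul_assoc, smul_smul, ← neg_smul]
  congr 1
  push_cast
  field_simp
  ring

instance : Unique (Composition 0) := by
  refine ⟨⟨⟨[], by simp, rfl⟩⟩, fun c => ?_⟩
  have h : c.blocks = [] := by
    rcases hb : c.blocks with _ | ⟨a, l⟩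
    · rfl
    · exfalso
      have hp : 0 < a := c.blocks_pos (by rw [hb]; exact List.mem_cons_self)
      have hs := c.blocks_sum
      rw [hb, List.sum_cons] at hs
      omega
  exact Composition.ext h

lemma cc_zero : cc T 0 = 1 := by
  rw [cc, Fintype.sum_unique]
  have : (default : Composition 0).blocks = [] := rfl
  exact (congrArg (w T) this).trans (w_nil T)

lemma blocks_ne_nil {n : ℕ} (hn : n ≠ 0) (c : Composition n) : c.blocks ≠ [] := by
  intro h
  exact hn (c.blocks_sum.symm.trans (by rw [h]; rfl))

lemma headI_mem_Icc {n : ℕ} (hn : n ≠ 0) (c : Composition n) :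
    c.blocks.head (blocks_ne_nil hn c) ∈ Finset.Icc 1 n := by
  have hne := blocks_ne_nil hn c
  simp only [Finset.mem_Icc]
  constructor
  · exact c.blocks_pos (List.head_mem hne)
  · calc c.blocks.head hne ≤ c.blocks.sum :=
          List.single_le_sum (fun x _ => Nat.zero_le x) _ (List.head_mem hne)
      _ = n := c.blocks_sum

lemma sum_comp_split {M : Type*} [AddCommMonoid M] {n : ℕ} (hn : n ≠ 0) (g : List ℕ → M) :
    ∑ c : Composition n, g c.blocks
      = ∑ m ∈ Finset.Icc 1 n, ∑ c : Composition (n - m), g (m :: c.blocks) := by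
  rw [Finset.sum_sigma']
  symm
  refine Finset.sum_bij'
    (fun (x : Σ m : ℕ, Composition (n - m)) (hx : x ∈ (Icc 1 n).sigma fun _ => univ) =>
      (⟨x.1 :: x.2.blocks,
        by
          intro i hi
          rcases List.mem_cons.mp hi with h | h
          · subst h
            have := (Finset.mem_sigma.mp hx).1
            simp only [Finset.mem_Icc] at this
            omega
          · exact x.2.blocks_pos h,
        by
          have hx1 := (Finset.mem_sigma.mp hx).1
          simp only [Finset.mem_Icc] at hx1
          rw [List.sum_cons, x.2.blocks_sum]
          omega⟩ : Composition n))
    (fun c hc =>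
      ⟨c.blocks.head (blocks_ne_nil hn c), ⟨c.blocks.tail,
        fun hi => c.blocks_pos (List.mem_of_mem_tail hi),
        by
          have h := c.blocks_sum
          have hne := blocks_ne_nil hn c
          conv_lhs at h => rw [← List.cons_head_tail hne]
          rw [List.sum_cons] at h
          omega⟩⟩)
    ?_ ?_ ?_ ?_ ?_
  · intro x hx; exact Finset.mem_univ _
  · intro c hc
    exact Finset.mem_sigma.mpr ⟨headI_mem_Icc hn c, Finset.mem_univ _⟩
  · intro x hx
    rcases x with ⟨m, c⟩
    simp only [List.head_cons, List.tail_cons]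
  · intro c hc
    apply Composition.ext
    simp only
    exact List.cons_head_tail (blocks_ne_nil hn c)
  · intro x hx
    rfl

def rev {n : ℕ} (c : Composition n) : Composition n :=
  ⟨c.blocks.reverse, fun hi => c.blocks_pos (List.mem_reverse.mp hi), by
    rw [List.sum_reverse, c.blocks_sum]⟩

lemma rev_rev {n : ℕ} (c : Composition n) : rev (rev c) = c :=
  Composition.ext (by simp [rev])

lemma sum_comp_rev {M : Type*} [AddCommMonoid M] {n : ℕ} (g : List ℕ → M) :
    ∑ c : Composition n, g c.blocks = ∑ c : Composition n, g c.blocks.reverse :=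
  Fintype.sum_bijective rev
    (Function.bijective_iff_has_inverse.mpr ⟨rev, rev_rev, rev_rev⟩)
    _ _ (fun c => by simp [rev])

lemma sum_comp_split_last {M : Type*} [AddCommMonoid M] {n : ℕ} (hn : n ≠ 0)
    (g : List ℕ → M) :
    ∑ c : Composition n, g c.blocks
      = ∑ m ∈ Finset.Icc 1 n, ∑ c : Composition (n - m), g (c.blocks ++ [m]) := by
  rw [sum_comp_rev g, sum_comp_split hn (fun l => g l.reverse)]
  refine Finset.sum_congr rfl fun m _ => ?_
  rw [sum_comp_rev (fun l => g (l ++ [m]))]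
  refine Finset.sum_congr rfl fun c _ => ?_
  simp

/-- First-block recursion. -/
lemma cc_rec_first {n : ℕ} (hn : n ≠ 0) :
    cc T n = -∑ m ∈ Finset.Icc 1 n, ((m.factorial : ℂ))⁻¹ • (T m * cc T (n - m)) := by
  rw [cc, sum_comp_split hn (w T)]
  rw [← Finset.sum_neg_distrib]
  refine Finset.sum_congr rfl fun m _ => ?_
  simp only [w_cons]
  rw [cc, Finset.mul_sum, Finset.smul_sum, ← Finset.sum_neg_distrib]

/-- Last-block recursion. -/
lemma cc_rec_last {n : ℕ} (hn : n ≠ 0) :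
    cc T n = -∑ m ∈ Finset.Icc 1 n, ((m.factorial : ℂ))⁻¹ • (cc T (n - m) * T m) := by
  rw [cc, sum_comp_split_last hn (w T)]
  rw [← Finset.sum_neg_distrib]
  refine Finset.sum_congr rfl fun m _ => ?_
  simp only [w_concat]
  rw [cc, Finset.sum_mul, Finset.smul_sum, ← Finset.sum_neg_distrib]

lemma Icc_to_range {M : Type*} [AddCommMonoid M] (n : ℕ) (f : ℕ → M) :
    ∑ m ∈ Finset.Icc 1 n, f m = ∑ i ∈ Finset.range n, f (n - i) := by
  refine Finset.sum_nbij' (fun m => n - m) (fun i => n - i) ?_ ?_ ?_ ?_ ?_ <;>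
    intros a ha <;> simp only [Finset.mem_Icc, Finset.mem_range] at * <;>
    first
      | omega
      | (rw [Nat.sub_sub_self (by omega)])

lemma Icc_to_range' {M : Type*} [AddCommMonoid M] (n : ℕ) (f : ℕ → M) :
    ∑ m ∈ Finset.Icc 1 n, f m = ∑ i ∈ Finset.range n, f (i + 1) := by
  rw [← Finset.Ico_add_one_right_eq_Icc, Finset.sum_Ico_eq_sum_range]
  simp [Nat.add_comm]

lemma coeff_anti (n : ℕ) :
    (PowerSeries.coeff n) (antiChronoSeries T) = Complex.I ^ n • cc T n := by
  rw [antiChronoSeries, PowerSeries.coeff_mk]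
  rcases eq_or_ne n 0 with rfl | hn
  · simp [cc_zero]
  · rw [if_neg hn, antiChrono, cc]
    rw [smul_smul, Finset.smul_sum, Finset.smul_sum]
    refine Finset.sum_congr rfl fun c _ => ?_
    rw [w, smul_smul, smul_smul, smul_smul]
    congr 1
    have hlen : c.length = c.blocks.length := rfl
    rw [hlen]
    have hfac : (n.factorial : ℂ) ≠ 0 := Nat.cast_ne_zero.mpr n.factorial_ne_zero
    field_simp
    ring_nf
    rw [show ((-1 : ℂ)) ^ (n * 2) = 1 by rw [mul_comm n 2, pow_mul, neg_one_sq, one_pow]]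
    ring

lemma coeff_chrono (n : ℕ) :
    (PowerSeries.coeff n) (chronoSeries T)
      = if n = 0 then 1 else (Complex.I ^ n / (n.factorial : ℂ)) • T n := by
  rw [chronoSeries, PowerSeries.coeff_mk]

end AC

/-- The anti-chronological series is the (two-sided) inverse of the S-matrix series:
`S̄ * S = 1` and `S * S̄ = 1` in `PowerSeries A`. -/

theorem antiChronoSeries_mul_chronoSeries
    {A : Type*} [Ring A] [Algebra ℂ A] (T : ℕ → A) :
    antiChronoSeries T * chronoSeries T = 1 ∧
      chronoSeries T * antiChronoSeries T = 1 := by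
  open AC in
  constructor
  · ext n
    rw [PowerSeries.coeff_mul, Finset.Nat.sum_antidiagonal_eq_sum_range_succ_mk]
    rcases eq_or_ne n 0 with rfl | hn
    · simp [coeff_anti, coeff_chrono, cc_zero]
    · rw [Finset.sum_range_succ, PowerSeries.coeff_one, if_neg hn]
      have h1 : ∀ i ∈ Finset.range n,
          (PowerSeries.coeff i) (antiChronoSeries T) *
            (PowerSeries.coeff (n - i)) (chronoSeries T)
          = Complex.I ^ n • (((n - i).factorial : ℂ))⁻¹ • (cc T i * T (n - i)) := by
        intro i hi
        have hlt := Finset.mem_range.mp hi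
        rw [coeff_anti, coeff_chrono, if_neg (by omega), smul_mul_smul_comm, smul_smul]
        congr 1
        rw [div_eq_mul_inv, ← mul_assoc, ← pow_add, Nat.add_sub_cancel' hlt.le]
      rw [Finset.sum_congr rfl h1, ← Finset.smul_sum, Nat.sub_self, coeff_chrono,
        if_pos rfl, mul_one, coeff_anti, ← smul_add]
      have hrec := cc_rec_last T hn
      rw [Icc_to_range] at hrec
      have h2 : ∑ i ∈ Finset.range n,
          (((n - i).factorial : ℂ))⁻¹ • (cc T (n - (n - i)) * T (n - i))
          = ∑ i ∈ Finset.range n, (((n - i).factorial : ℂ))⁻¹ • (cc T i * T (n - i)) := by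
        refine Finset.sum_congr rfl fun i hi => ?_
        rw [Nat.sub_sub_self (Finset.mem_range.mp hi).le]
      rw [h2] at hrec
      rw [hrec]
      simp
  · ext n
    rw [PowerSeries.coeff_mul, Finset.Nat.sum_antidiagonal_eq_sum_range_succ_mk]
    rcases eq_or_ne n 0 with rfl | hn
    · simp [coeff_anti, coeff_chrono, cc_zero]
    · rw [Finset.sum_range_succ', PowerSeries.coeff_one, if_neg hn]
      have h1 : ∀ i ∈ Finset.range n,
          (PowerSeries.coeff (i + 1)) (chronoSeries T) *
            (PowerSeries.coeff (n - (i + 1))) (antiChronoSeries T)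
          = Complex.I ^ n • (((i + 1).factorial : ℂ))⁻¹ •
              (T (i + 1) * cc T (n - (i + 1))) := by
        intro i hi
        have hlt := Finset.mem_range.mp hi
        rw [coeff_anti, coeff_chrono, if_neg (by omega), smul_mul_smul_comm, smul_smul]
        congr 1
        rw [div_eq_mul_inv, mul_right_comm, ← pow_add,
          Nat.add_sub_cancel' (by omega : i + 1 ≤ n)]
      rw [Finset.sum_congr rfl h1, ← Finset.smul_sum, Nat.sub_zero, coeff_chrono,
        if_pos rfl, one_mul, coeff_anti, ← smul_add]
      have hrec := cc_rec_first T hn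
      rw [Icc_to_range'] at hrec
      rw [hrec]
      simp
end
end

section
/- (Key step of the cohomology computation for the supercharge.) Let V be a module over a commutative ring with an internal direct sum decomposition V = V₁ ⊕ V₀ (V₁, V₀ submodules). Let Q, Q̃ : V → V be linear maps with Q∘Q = 0, Q̃∘Q̃ = 0, Q(V₀) ⊆ V₁ and Q̃(V₀) ⊆ V₁ (vanishing of the V₀→V₀ blocks). Set Y := Q∘Q̃ + Q̃∘Q and assume Y(V₁) ⊆ V₁, Y(V₀) ⊆ V₀, and that the restriction of Y to V₁ is a bijection of V₁ onto itself. Then every Φ ∈ ker Q can be written as Φ = Qψ + Φ̃ with ψ ∈ V and Φ̃ ∈ V₀; i.e., for every Φ with QΦ = 0 there exists ψ ∈ V such that Φ − Qψ ∈ V₀. -/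
/-!
`Y = Q Q̃ + Q̃ Q` commutes with `Q` and `Q̃` because both square to zero. Since `Y` preserves the
splitting `V = V₁ ⊕ V₀` and is invertible on `V₁`, its kernel lies in `V₀`, and its range contains
`Q̃ V`: `Q̃ V₀ ⊆ V₁ = Y V₁` and `Q̃ V₁ = Q̃ Y V₁ = Y Q̃ V₁`. So for a closed `Φ` pick `ψ` with
`Y ψ = Q̃ Φ`; then `Y (Φ - Q ψ) = Q Q̃ Φ - Q Y ψ = 0`, whence `Φ - Q ψ ∈ V₀`.
-/

theorem commute_mul_add_mul_of_mul_self_eq_zero {A : Type*} [NonUnitalSemiring A] {a b : A}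
    (ha : a * a = 0) : Commute a (a * b + b * a) := by
  rw [Commute, SemiconjBy, mul_add, add_mul, ← mul_assoc, ha, zero_mul, mul_assoc b, ha,
    mul_zero, zero_add, add_zero, mul_assoc]

namespace LinearMap

variable {R V : Type*}

theorem range_le_range_of_commute_of_mapsTo_isCompl [Semiring R] [AddCommMonoid V] [Module R V]
    {V1 V0 : Submodule R V} (hcompl : IsCompl V1 V0) {f g : Module.End R V} (hfg : Commute f g)
    (hg0 : ∀ x ∈ V0, g x ∈ V1) (hf1 : ∀ x ∈ V1, f x ∈ V1)
    (hsurj : Function.Surjective (f.restrict hf1)) :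
    range g ≤ range f := by
  have hV1 : ∀ v ∈ V1, v ∈ range f := fun v hv => by
    obtain ⟨χ, hχ⟩ := hsurj ⟨v, hv⟩
    exact ⟨χ, congrArg Subtype.val hχ⟩
  rintro _ ⟨x, rfl⟩
  obtain ⟨x1, x0, hx1, hx0, rfl⟩ := Submodule.codisjoint_iff_exists_add_eq.mp hcompl.codisjoint x
  obtain ⟨χ, rfl⟩ := hV1 x1 hx1
  rw [map_add, ← Module.End.mul_apply, ← hfg, Module.End.mul_apply]
  exact add_mem (mem_range_self f (g χ)) (hV1 _ (hg0 x0 hx0))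

theorem ker_le_of_mapsTo_isCompl [Ring R] [AddCommGroup V] [Module R V]
    {V1 V0 : Submodule R V} (hcompl : IsCompl V1 V0) {f : V →ₗ[R] V}
    (hf1 : ∀ x ∈ V1, f x ∈ V1) (hf0 : ∀ x ∈ V0, f x ∈ V0)
    (hinj : Function.Injective (f.restrict hf1)) :
    ker f ≤ V0 := by
  intro x hx
  obtain ⟨x1, x0, hx1, hx0, rfl⟩ := Submodule.codisjoint_iff_exists_add_eq.mp hcompl.codisjoint x
  have hfx1 : f x1 = -f x0 := eq_neg_of_add_eq_zero_left (by rwa [← map_add])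
  have hfx1_zero : f x1 = 0 :=
    Submodule.disjoint_def.mp hcompl.disjoint _ (hf1 x1 hx1) (hfx1 ▸ neg_mem (hf0 x0 hx0))
  have hx1_zero : x1 = 0 := congrArg Subtype.val
    (hinj (a₁ := ⟨x1, hx1⟩) (a₂ := 0) (Subtype.ext (by simpa using hfx1_zero)))
  rwa [hx1_zero, zero_add]

end LinearMap

theorem closed_vector_ghost_free_mod_exact_general
    {R : Type*} [CommRing R] {V : Type*} [AddCommGroup V] [Module R V]
    (V1 V0 : Submodule R V) (hcompl : IsCompl V1 V0)
    (Q Qt : V →ₗ[R] V) (hQ2 : Q ∘ₗ Q = 0) (hQt2 : Qt ∘ₗ Qt = 0)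
    (hQt0 : ∀ x ∈ V0, Qt x ∈ V1)
    (hY1 : ∀ x ∈ V1, (Q ∘ₗ Qt + Qt ∘ₗ Q) x ∈ V1)
    (hY0 : ∀ x ∈ V0, (Q ∘ₗ Qt + Qt ∘ₗ Q) x ∈ V0)
    (hYbij : Function.Bijective ((Q ∘ₗ Qt + Qt ∘ₗ Q).restrict hY1)) :
    ∀ Φ : V, Q Φ = 0 → ∃ ψ : V, Φ - Q ψ ∈ V0 := by
  intro Φ hΦ
  have hQY : Commute Q (Q * Qt + Qt * Q) := commute_mul_add_mul_of_mul_self_eq_zero hQ2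
  have hQtY : Commute Qt (Q * Qt + Qt * Q) := by
    rw [add_comm]; exact commute_mul_add_mul_of_mul_self_eq_zero hQt2
  obtain ⟨ψ, hψ⟩ : Qt Φ ∈ LinearMap.range (Q * Qt + Qt * Q) :=
    LinearMap.range_le_range_of_commute_of_mapsTo_isCompl hcompl hQtY.symm hQt0 hY1 hYbij.2
      (LinearMap.mem_range_self Qt Φ)
  refine ⟨ψ, LinearMap.ker_le_of_mapsTo_isCompl hcompl hY1 hY0 hYbij.1 ?_⟩
  have hYQψ : (Q * Qt + Qt * Q) (Q ψ) = Q (Qt Φ) := by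
    rw [← Module.End.mul_apply, ← hQY, Module.End.mul_apply, hψ]
  change (Q * Qt + Qt * Q) (Φ - Q ψ) = 0
  rw [map_sub, hYQψ, LinearMap.add_apply, Module.End.mul_apply, Module.End.mul_apply, hΦ,
    map_zero, add_zero, sub_self]

/-- Key step of the cohomology computation for the supercharge: if `V = V₁ ⊕ V₀`,
`Q² = 0`, `Q̃² = 0`, the `V₀ → V₀` blocks of `Q` and `Q̃` vanish (`Q(V₀) ⊆ V₁`,
`Q̃(V₀) ⊆ V₁`), the anticommutator `Y = Q∘Q̃ + Q̃∘Q` preserves both `V₁` and `V₀`,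
and `Y` restricted to `V₁` is bijective, then every `Q`-closed vector `Φ` can be
written as `Φ = Qψ + Φ̃` with `Φ̃ ∈ V₀`. -/
theorem closed_vector_ghost_free_mod_exact
    {R : Type*} [CommRing R] {V : Type*} [AddCommGroup V] [Module R V]
    (V1 V0 : Submodule R V) (hcompl : IsCompl V1 V0)
    (Q Qt : V →ₗ[R] V) (hQ2 : Q ∘ₗ Q = 0) (hQt2 : Qt ∘ₗ Qt = 0)
    (hQ0 : ∀ x ∈ V0, Q x ∈ V1) (hQt0 : ∀ x ∈ V0, Qt x ∈ V1)
    (hY1 : ∀ x ∈ V1, (Q ∘ₗ Qt + Qt ∘ₗ Q) x ∈ V1)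
    (hY0 : ∀ x ∈ V0, (Q ∘ₗ Qt + Qt ∘ₗ Q) x ∈ V0)
    (hYbij : Function.Bijective ((Q ∘ₗ Qt + Qt ∘ₗ Q).restrict hY1)) :
    ∀ Φ : V, Q Φ = 0 → ∃ ψ : V, Φ - Q ψ ∈ V0 :=
  closed_vector_ghost_free_mod_exact_general V1 V0 hcompl Q Qt hQ2 hQt2 hQt0 hY1 hY0 hYbij
end

section
/- (Jacobi identity from second-order gauge invariance.) Let r be a positive integer and f : Fin r → Fin r → Fin r → ℝ be completely antisymmetric (antisymmetric under the interchange of any two of its three arguments). Then the following are equivalent: (1) for all a, b, d, e, ∑_{c} (2·f c a d · f c b e − f c a b · f c d e) = ∑_{c} (2·f c b d · f c a e − f c b a · f c d e) (i.e. the expression 2 f_{cad} f_{cbe} − f_{cab} f_{cde}, summed over c, is symmetric under a ↔ b); (2) the Jacobi identities hold: for all a, b, d, e, ∑_{c} (f a b c · f d e c + f b d c · f a e c + f d a c · f b e c) = 0. -/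
/-!
Complete antisymmetry makes `f` cyclic, `f a b c = f c a b`. Bringing every factor to the form
`f c _ _` shows that, summand by summand, the antisymmetric part under `a ↔ b` of
`2 f_{cad} f_{cbe} − f_{cab} f_{cde}` is `-2` times the Jacobi expression; over `ℝ` one vanishes
exactly when the other does.
-/

namespace StructureConstants

variable {ι R : Type*} [CommRing R] {f : ι → ι → ι → R}

theorem cyclic (hanti1 : ∀ a b c, f a b c = -f b a c) (hanti2 : ∀ a b c, f a b c = -f a c b)
    (a b c : ι) : f a b c = f c a b := by
  rw [hanti2, hanti1, neg_neg]

theorem sum_sub_swap_eq_neg_two_mul_jacobi [Fintype ι]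
    (hanti1 : ∀ a b c, f a b c = -f b a c) (hanti2 : ∀ a b c, f a b c = -f a c b)
    (a b d e : ι) :
    ∑ c, (2 * f c a d * f c b e - f c a b * f c d e)
        - ∑ c, (2 * f c b d * f c a e - f c b a * f c d e)
      = -2 * ∑ c, (f a b c * f d e c + f b d c * f a e c + f d a c * f b e c) := by
  rw [← Finset.sum_sub_distrib, Finset.mul_sum]
  refine Finset.sum_congr rfl fun c _ => ?_
  have cyc := cyclic hanti1 hanti2
  rw [cyc a b c, cyc d e c, cyc b d c, cyc a e c, cyc d a c, cyc b e c, hanti2 c d a,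
    hanti2 c b a]
  ring

end StructureConstants

theorem gauge_invariance_iff_jacobi_general
    (r : ℕ) (f : Fin r → Fin r → Fin r → ℝ)
    (hanti1 : ∀ a b c, f a b c = - f b a c)
    (hanti2 : ∀ a b c, f a b c = - f a c b) :
    (∀ a b d e : Fin r,
        ∑ c, (2 * f c a d * f c b e - f c a b * f c d e)
          = ∑ c, (2 * f c b d * f c a e - f c b a * f c d e)) ↔
      (∀ a b d e : Fin r,
        ∑ c, (f a b c * f d e c + f b d c * f a e c + f d a c * f b e c) = 0) := by
  refine forall₄_congr fun a b d e => ?_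
  rw [← sub_eq_zero, StructureConstants.sum_sub_swap_eq_neg_two_mul_jacobi hanti1 hanti2,
    mul_eq_zero, or_iff_right (by norm_num)]

/-- Jacobi identity from second-order gauge invariance: for completely antisymmetric
real constants `f_{abc}`, the symmetry of `∑_c (2 f_{cad} f_{cbe} − f_{cab} f_{cde})`
under `a ↔ b` is equivalent to the Jacobi identities
`∑_c (f_{abc} f_{dec} + f_{bdc} f_{aec} + f_{dac} f_{bec}) = 0`. -/
theorem gauge_invariance_iff_jacobi
    (r : ℕ) (hr : 0 < r) (f : Fin r → Fin r → Fin r → ℝ)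
    (hanti1 : ∀ a b c, f a b c = - f b a c)
    (hanti2 : ∀ a b c, f a b c = - f a c b) :
    (∀ a b d e : Fin r,
        ∑ c, (2 * f c a d * f c b e - f c a b * f c d e)
          = ∑ c, (2 * f c b d * f c a e - f c b a * f c d e)) ↔
      (∀ a b d e : Fin r,
        ∑ c, (f a b c * f d e c + f b d c * f a e c + f d a c * f b e c) = 0) :=
  gauge_invariance_iff_jacobi_general r f hanti1 hanti2
end
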